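/- arXiv:2310.08119 — 4 statements merged into one kernel-verified Lean document; each statement's English description precedes it below -/
import Mathlib

section
/- Suppose f : ℤ^N × ℝ → ℝ satisfies f(x,u) = o(|u|^{p−1}) uniformly in x as u → 0, and u ↦ f(x,u)/|u|^{p−1} is strictly increasing on (−∞,0) and on (0,∞). Then for every u ≠ 0 and every x, 0 < F(x,u) < (1/p) f(x,u)·u, where F(x,u) = ∫₀^u f(x,s) ds. -/
/-!
Write `f(x,s) = g(s) |s|^{p-1}`. Since `f(x,·) = o(|s|^{p-1})`, `g → 0` at `0`, so strict monotonicity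
makes `g > 0` on `(0,∞)`; hence `f(x,·) > 0` there and `F(x,u) > 0`. On `(0,u)` we have `g(s) < g(u)`,
so `F(x,u) < g(u) ∫₀^u s^{p-1} ds = g(u) u^p / p = f(x,u) u / p`. The case `u < 0` reduces to this one
via the reflection `s ↦ -f(x,-s)`.
-/

open scoped BigOperators
open Filter Topology

noncomputable section

abbrev Vtx (N : ℕ) := Fin N → ℤ

def LatAdj {N : ℕ} (x y : Vtx N) : Prop := (∑ i, |x i - y i|) = 1

instance {N : ℕ} (x y : Vtx N) : Decidable (LatAdj x y) := by
  unfold LatAdj; infer_instance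

/-- `∑_x |u x|^p`. -/
noncomputable def lpSum (N : ℕ) (p : ℝ) (u : Vtx N → ℝ) : ℝ := ∑' x, |u x| ^ p

/-- `(1/2) ∑_{x∼y} |u x − u y|^p` (sum over ordered pairs of adjacent vertices). -/
noncomputable def pEnergy (N : ℕ) (p : ℝ) (u : Vtx N → ℝ) : ℝ :=
  (1/2) * ∑' z : Vtx N × Vtx N, if LatAdj z.1 z.2 then |u z.1 - u z.2| ^ p else 0

/-- `(1/2) ∑_{x∼y} |∇_{xy}u|^{p−2} (∇_{xy}u)(∇_{xy}v)`. -/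
noncomputable def gradPair (N : ℕ) (p : ℝ) (u v : Vtx N → ℝ) : ℝ :=
  (1/2) * ∑' z : Vtx N × Vtx N,
    if LatAdj z.1 z.2 then |u z.2 - u z.1| ^ (p - 2) * (u z.2 - u z.1) * (v z.2 - v z.1) else 0

/-- discrete p-Laplacian. -/
noncomputable def pLap (N : ℕ) (p : ℝ) (u : Vtx N → ℝ) (x : Vtx N) : ℝ :=
  ∑' y, if LatAdj x y then |u y - u x| ^ (p - 2) * (u y - u x) else 0

/-- `‖u‖^p` for the potential norm. -/
noncomputable def eNormP (N : ℕ) (p : ℝ) (V : Vtx N → ℝ) (u : Vtx N → ℝ) : ℝ :=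
  pEnergy N p u + ∑' x, V x * |u x| ^ p

/-- the potential norm `‖u‖`. -/
noncomputable def eNorm (N : ℕ) (p : ℝ) (V : Vtx N → ℝ) (u : Vtx N → ℝ) : ℝ :=
  (eNormP N p V u) ^ (1/p)

/-- `F(x,t) = ∫₀^t f(x,s) ds`. -/
noncomputable def Fprim {N : ℕ} (f : Vtx N → ℝ → ℝ) (x : Vtx N) (t : ℝ) : ℝ :=
  ∫ s in (0:ℝ)..t, f x s

/-- the variational functional `Φ`. -/
noncomputable def PhiFun (N : ℕ) (p : ℝ) (V : Vtx N → ℝ) (f : Vtx N → ℝ → ℝ)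
    (u : Vtx N → ℝ) : ℝ :=
  (1/p) * eNormP N p V u - ∑' x, Fprim f x (u x)

/-- `Φ'(u)v`. -/
noncomputable def PhiDeriv (N : ℕ) (p : ℝ) (V : Vtx N → ℝ) (f : Vtx N → ℝ → ℝ)
    (u v : Vtx N → ℝ) : ℝ :=
  gradPair N p u v + (∑' x, V x * |u x| ^ (p - 2) * u x * v x) - ∑' x, f x (u x) * v x

/-- membership in `E = ℓ^p`. -/
def memE (N : ℕ) (p : ℝ) (u : Vtx N → ℝ) : Prop := Summable fun x => |u x| ^ p

/-- the Nehari manifold. -/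
def Nehari (N : ℕ) (p : ℝ) (V : Vtx N → ℝ) (f : Vtx N → ℝ → ℝ) : Set (Vtx N → ℝ) :=
  {u | memE N p u ∧ u ≠ 0 ∧ PhiDeriv N p V f u u = 0}

open Set

theorem StrictMonoOn.lt_of_tendsto_nhdsGT {α β : Type*} [TopologicalSpace α] [LinearOrder α]
    [OrderTopology α] [DenselyOrdered α] [NoMaxOrder α] [TopologicalSpace β] [Preorder β]
    [ClosedIicTopology β] {g : α → β} {a t : α} {c : β} (hg : StrictMonoOn g (Ioi a))
    (hlim : Tendsto g (𝓝[>] a) (𝓝 c)) (ht : a < t) : c < g t := by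
  obtain ⟨m, ham, hmt⟩ := exists_between ht
  have hcm : c ≤ g m := le_of_tendsto hlim <| mem_of_superset (Ioo_mem_nhdsGT ham)
    fun s hs => (hg hs.1 ham hs.2).le
  exact hcm.trans_lt (hg ham (ham.trans hmt) hmt)

theorem integral_abs_rpow_sub_one {p u : ℝ} (hp : 0 < p) (hu : 0 ≤ u) :
    ∫ s in (0:ℝ)..u, |s| ^ (p - 1) = u ^ p / p := by
  have habs : EqOn (fun s : ℝ => |s| ^ (p - 1)) (fun s => s ^ (p - 1)) (uIcc 0 u) := by
    intro s hs
    rw [uIcc_of_le hu] at hs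
    simp only [abs_of_nonneg hs.1]
  rw [intervalIntegral.integral_congr habs, integral_rpow (Or.inl (by linarith)),
    sub_add_cancel, Real.zero_rpow hp.ne', sub_zero]

theorem eq_div_abs_rpow_mul (a : ℝ) {s : ℝ} (hs : s ≠ 0) (q : ℝ) : a = a / |s| ^ q * |s| ^ q :=
  (div_mul_cancel₀ _ (Real.rpow_pos_of_pos (abs_pos.mpr hs) q).ne').symm

section PositiveHalfLine

variable {φ : ℝ → ℝ} {p u : ℝ}

theorem pos_of_strictMonoOn_div_abs_rpow
    (hlim : Tendsto (fun s => φ s / |s| ^ (p - 1)) (𝓝[>] 0) (𝓝 0))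
    (hmono : StrictMonoOn (fun s => φ s / |s| ^ (p - 1)) (Ioi 0)) {s : ℝ} (hs : 0 < s) :
    0 < φ s := by
  rw [eq_div_abs_rpow_mul (φ s) hs.ne' (p - 1)]
  exact mul_pos (hmono.lt_of_tendsto_nhdsGT hlim hs) (Real.rpow_pos_of_pos (abs_pos.mpr hs.ne') _)

theorem integral_lt_of_strictMonoOn_div_abs_rpow (hp : 1 ≤ p) (hφ : ContinuousOn φ (Icc 0 u))
    (hmono : StrictMonoOn (fun s => φ s / |s| ^ (p - 1)) (Ioi 0)) (hu : 0 < u) :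
    ∫ s in (0:ℝ)..u, φ s < φ u * u / p := by
  set g := fun s => φ s / |s| ^ (p - 1)
  have hle : ∀ s ∈ Ioc 0 u, φ s ≤ g u * |s| ^ (p - 1) := fun s hs => by
    rw [eq_div_abs_rpow_mul (φ s) hs.1.ne' (p - 1)]
    exact mul_le_mul_of_nonneg_right (hmono.monotoneOn hs.1 hu hs.2) (by positivity)
  have hlt : φ (u / 2) < g u * |u / 2| ^ (p - 1) := by
    rw [eq_div_abs_rpow_mul (φ (u / 2)) (by positivity : u / 2 ≠ 0) (p - 1)]
    exact mul_lt_mul_of_pos_right (hmono (by simp [hu]) hu (by linarith)) (by positivity)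
  have hcont : ContinuousOn (fun s => g u * |s| ^ (p - 1)) (Icc 0 u) :=
    (continuous_const.mul (continuous_abs.rpow_const fun _ => Or.inr (by linarith))).continuousOn
  calc ∫ s in (0:ℝ)..u, φ s < ∫ s in (0:ℝ)..u, g u * |s| ^ (p - 1) :=
        intervalIntegral.integral_lt_integral_of_continuousOn_of_le_of_exists_lt hu hφ hcont hle
          ⟨u / 2, ⟨by linarith, by linarith⟩, hlt⟩
    _ = φ u * u / p := by
        have hu' : u ^ p = u ^ (p - 1) * u := by
          rw [← Real.rpow_add_one hu.ne', sub_add_cancel]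
        have hne : u ^ (p - 1) ≠ 0 := (Real.rpow_pos_of_pos hu _).ne'
        rw [intervalIntegral.integral_const_mul, integral_abs_rpow_sub_one (by linarith) hu.le]
        simp only [g, abs_of_pos hu]
        rw [hu']
        field_simp

theorem integral_pos_and_lt_of_strictMonoOn_div_abs_rpow (hp : 1 ≤ p)
    (hφ : ContinuousOn φ (Icc 0 u))
    (hlim : Tendsto (fun s => φ s / |s| ^ (p - 1)) (𝓝[>] 0) (𝓝 0))
    (hmono : StrictMonoOn (fun s => φ s / |s| ^ (p - 1)) (Ioi 0)) (hu : 0 < u) :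
    0 < ∫ s in (0:ℝ)..u, φ s ∧ ∫ s in (0:ℝ)..u, φ s < φ u * u / p :=
  ⟨intervalIntegral.intervalIntegral_pos_of_pos_on (hφ.intervalIntegrable_of_Icc hu.le)
      (fun _ hs => pos_of_strictMonoOn_div_abs_rpow hlim hmono hs.1) hu,
    integral_lt_of_strictMonoOn_div_abs_rpow hp hφ hmono hu⟩

end PositiveHalfLine

theorem integral_pos_and_lt_of_isLittleO_of_strictMonoOn {φ : ℝ → ℝ} {p u : ℝ} (hp : 1 ≤ p)
    (hφ : Continuous φ) (hφo : φ =o[𝓝 0] fun s => |s| ^ (p - 1))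
    (hneg : StrictMonoOn (fun s => φ s / |s| ^ (p - 1)) (Iio 0))
    (hpos : StrictMonoOn (fun s => φ s / |s| ^ (p - 1)) (Ioi 0)) (hu : u ≠ 0) :
    0 < ∫ s in (0:ℝ)..u, φ s ∧ ∫ s in (0:ℝ)..u, φ s < φ u * u / p := by
  have hlim := hφo.tendsto_div_nhds_zero
  rcases hu.lt_or_gt with hu | hu
  · have hrefl : (fun s => -φ (-s) / |s| ^ (p - 1)) = fun s => -(φ (-s) / |-s| ^ (p - 1)) := by
      ext s
      rw [abs_neg, neg_div]
    have hlim' : Tendsto (fun s => -φ (-s) / |s| ^ (p - 1)) (𝓝[>] 0) (𝓝 0) := by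
      have h := (hlim.comp (continuous_neg.tendsto' 0 0 neg_zero)).neg
      rw [neg_zero] at h
      rw [hrefl]
      exact h.mono_left nhdsWithin_le_nhds
    have hmono' : StrictMonoOn (fun s => -φ (-s) / |s| ^ (p - 1)) (Ioi 0) := by
      rw [hrefl]
      exact (hneg.comp_strictAntiOn (strictMono_id.neg.strictAntiOn _)
        fun s (hs : 0 < s) => neg_lt_zero.mpr hs).neg
    have key := integral_pos_and_lt_of_strictMonoOn_div_abs_rpow (φ := fun s => -φ (-s)) hp
      (by fun_prop) hlim' hmono' (neg_pos.mpr hu)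
    rwa [intervalIntegral.integral_neg, intervalIntegral.integral_comp_neg, neg_zero, neg_neg,
      intervalIntegral.integral_symm, neg_neg, neg_mul_neg] at key
  · exact integral_pos_and_lt_of_strictMonoOn_div_abs_rpow hp hφ.continuousOn
      (hlim.mono_left nhdsWithin_le_nhds) hpos hu

/-- `0 < F(x,u) < (1/p) f(x,u) u` for `u ≠ 0`. -/
theorem stmt_8 (N : ℕ) (p : ℝ) (hp : 1 < p)
    (f : Vtx N → ℝ → ℝ) (hfc : ∀ x, Continuous (f x))
    (hA3 : ∀ ε > (0:ℝ), ∃ δ > (0:ℝ), ∀ x u, |u| < δ → |f x u| ≤ ε * |u| ^ (p - 1))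
    (hA4 : ∀ x, StrictMonoOn (fun u => f x u / |u| ^ (p - 1)) (Set.Iio 0) ∧
               StrictMonoOn (fun u => f x u / |u| ^ (p - 1)) (Set.Ioi 0)) :
    ∀ (x : Vtx N) (u : ℝ), u ≠ 0 →
      0 < Fprim f x u ∧ Fprim f x u < (1/p) * (f x u * u) := by
  intro x u hu
  have hfo : f x =o[𝓝 0] fun s => |s| ^ (p - 1) := Asymptotics.isLittleO_iff.mpr fun ε hε => by
    obtain ⟨δ, hδ, hf⟩ := hA3 ε hε
    filter_upwards [Metric.ball_mem_nhds 0 hδ] with s hs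
    rw [Real.norm_eq_abs, Real.norm_eq_abs, abs_of_nonneg (Real.rpow_nonneg (abs_nonneg s) _)]
    exact hf x s (by simpa using hs)
  rw [Fprim, one_div_mul_eq_div]
  exact integral_pos_and_lt_of_isLittleO_of_strictMonoOn hp.le (hfc x) hfo (hA4 x).1 (hA4 x).2 hu
end
end

section
/- Let E = ℓ^p(ℤ^N) with the norm ‖u‖ = ((1/2)∑_{x∼y}|∇_{xy}u|^p + ∑_x V(x)|u|^p)^{1/p} where 0 < V₁ ≤ V ≤ V₂, and let Φ(u) = (1/p)‖u‖^p − ∑_x F(x,u) with f satisfying assumptions (A₁)–(A₅). Then for every w ∈ E \ {0}, the function s ↦ Φ(sw) on (0,∞) has a unique maximum point s_w ∈ (0,∞), which is the unique positive s with Φ'(sw)(w) = 0; moreover s ↦ Φ(sw) is increasing on (0,s_w) and decreasing on (s_w,∞). -/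
open scoped BigOperators
open Filter Topology

noncomputable section

/-! Along the ray through `w`, `Φ(s w) = sᵖ ‖w‖ᵖ / p - ∑ₓ F(x, s w(x))` has derivative
`s^{p-1} (‖w‖ᵖ - D(s))` with `D(s) = ∑ₓ f(x, s w(x)) w(x) / s^{p-1}`. By (A₄) `D` is strictly
increasing, by (A₃) it tends to `0` as `s → 0⁺`, and by (A₅) together with `p F(x,u) ≤ f(x,u) u`
(a consequence of (A₄)) it tends to `∞`; periodicity makes `V` bounded, so `0 < ‖w‖ᵖ < ∞`.
Hence the derivative has exactly one zero `s_w` (Darboux), is positive before it and negative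
after it. -/

open Set

lemma Real.rpow_sub_one_mul_self {x r : ℝ} (hx : 0 ≤ x) (hr : r ≠ 0) :
    x ^ (r - 1) * x = x ^ r := by
  rw [← Real.rpow_add_one' hx (by simpa using hr), sub_add_cancel]

lemma abs_mul_rpow_sub_two_mul_mul {p s : ℝ} (hp : p ≠ 0) (hs : 0 < s) (d : ℝ) :
    |s * d| ^ (p - 2) * (s * d) * d = s ^ (p - 1) * |d| ^ p := by
  rcases eq_or_ne d 0 with rfl | hd
  · simp [Real.zero_rpow hp]
  have hd' : 0 < |d| := abs_pos.2 hd
  have hsq : d * d = |d| ^ (2 : ℝ) := by rw [Real.rpow_two, sq_abs, sq]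
  rw [abs_mul, abs_of_pos hs, Real.mul_rpow hs.le hd'.le]
  calc s ^ (p - 2) * |d| ^ (p - 2) * (s * d) * d
      = (s ^ (p - 2) * s) * (|d| ^ (p - 2) * |d| ^ (2 : ℝ)) := by rw [← hsq]; ring
    _ = s ^ (p - 1) * |d| ^ p := by
      rw [← Real.rpow_add_one hs.ne', ← Real.rpow_add hd']
      ring_nf

section Scalar

variable {p : ℝ} {f g : ℝ → ℝ} {u : ℝ}

lemma MonotoneOn.nonneg_of_tendsto_nhdsGT_zero (hmono : MonotoneOn g (Ioi 0))
    (hg : Tendsto g (𝓝[>] 0) (𝓝 0)) (hu : 0 < u) : 0 ≤ g u := by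
  by_contra! hneg
  obtain ⟨v, hgv, hv⟩ := ((hg.eventually (Ioi_mem_nhds hneg)).and (Ioo_mem_nhdsGT hu)).exists
  exact (hmono hv.1 hu hv.2.le).not_gt hgv

lemma MonotoneOn.nonpos_of_tendsto_nhdsLT_zero (hmono : MonotoneOn g (Iio 0))
    (hg : Tendsto g (𝓝[<] 0) (𝓝 0)) (hu : u < 0) : g u ≤ 0 := by
  by_contra! hpos
  obtain ⟨v, hgv, hv⟩ := ((hg.eventually (Iio_mem_nhds hpos)).and (Ioo_mem_nhdsLT hu)).exists
  exact (hmono hu hv.2 hv.1.le).not_gt hgv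

lemma map_zero_of_abs_le_rpow (hp : p ≠ 1)
    (hsmall : ∀ ε > 0, ∃ δ > 0, ∀ u, |u| < δ → |f u| ≤ ε * |u| ^ (p - 1)) : f 0 = 0 := by
  obtain ⟨δ, hδ, h⟩ := hsmall 1 one_pos
  simpa [Real.zero_rpow (sub_ne_zero.2 hp)] using h 0 (by simpa using hδ)

lemma tendsto_div_abs_rpow_of_abs_le_rpow
    (hsmall : ∀ ε > 0, ∃ δ > 0, ∀ u, |u| < δ → |f u| ≤ ε * |u| ^ (p - 1)) :
    Tendsto (fun u => f u / |u| ^ (p - 1)) (𝓝[≠] 0) (𝓝 0) := by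
  refine Metric.tendsto_nhdsWithin_nhds.2 fun ε hε => ?_
  obtain ⟨δ, hδ, h⟩ := hsmall (ε / 2) (half_pos hε)
  refine ⟨δ, hδ, fun {u} hu hdist => ?_⟩
  have hpos : 0 < |u| ^ (p - 1) := Real.rpow_pos_of_pos (abs_pos.2 hu) _
  rw [Real.dist_eq, sub_zero] at hdist ⊢
  rw [abs_div, abs_of_pos hpos, div_lt_iff₀ hpos]
  linarith [h u hdist, mul_lt_mul_of_pos_right (half_lt_self hε) hpos]

lemma zero_le_mul_self_of_monotoneOn_div_rpow
    (hsmall : ∀ ε > 0, ∃ δ > 0, ∀ u, |u| < δ → |f u| ≤ ε * |u| ^ (p - 1))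
    (hneg : MonotoneOn (fun u => f u / |u| ^ (p - 1)) (Iio 0))
    (hpos : MonotoneOn (fun u => f u / |u| ^ (p - 1)) (Ioi 0)) (u : ℝ) : 0 ≤ f u * u := by
  have hlim := tendsto_div_abs_rpow_of_abs_le_rpow hsmall
  rcases lt_trichotomy u 0 with hu | rfl | hu
  · have h := hneg.nonpos_of_tendsto_nhdsLT_zero
      (hlim.mono_left (nhdsWithin_mono _ fun _ h => ne_of_lt h)) hu
    rw [div_le_iff₀ (Real.rpow_pos_of_pos (abs_pos.2 hu.ne) _), zero_mul] at h
    exact mul_nonneg_of_nonpos_of_nonpos h hu.le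
  · simp
  · have h := hpos.nonneg_of_tendsto_nhdsGT_zero
      (hlim.mono_left (nhdsWithin_mono _ fun _ h => ne_of_gt h)) hu
    rw [le_div_iff₀ (Real.rpow_pos_of_pos (abs_pos.2 hu.ne') _), zero_mul] at h
    exact mul_nonneg h hu.le

lemma mul_integral_le_mul_self_of_pos (hp : 1 < p) (hfc : Continuous f) (hf0 : f 0 = 0)
    (hmono : MonotoneOn (fun u => f u / |u| ^ (p - 1)) (Ioi 0)) (hu : 0 < u) :
    p * ∫ t in (0:ℝ)..u, f t ≤ f u * u := by
  have hle : ∀ t ∈ Icc 0 u, f t ≤ f u / u ^ (p - 1) * t ^ (p - 1) := by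
    rintro t ⟨ht0, htu⟩
    rcases ht0.eq_or_lt with rfl | ht0
    · simp [hf0, Real.zero_rpow (by linarith : p - 1 ≠ 0)]
    · have h := hmono ht0 hu htu
      simp only [abs_of_pos ht0, abs_of_pos hu] at h
      rwa [div_le_iff₀ (Real.rpow_pos_of_pos ht0 _)] at h
  have hint : ∫ t in (0:ℝ)..u, f t ≤ ∫ t in (0:ℝ)..u, f u / u ^ (p - 1) * t ^ (p - 1) :=
    intervalIntegral.integral_mono_on hu.le (hfc.intervalIntegrable _ _)
      ((continuous_const.mul (continuous_id.rpow_const fun _ => Or.inr (by linarith))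
        ).intervalIntegrable _ _) hle
  rw [intervalIntegral.integral_const_mul, integral_rpow (Or.inl (by linarith)), sub_add_cancel,
    Real.zero_rpow (by linarith)] at hint
  calc p * ∫ t in (0:ℝ)..u, f t ≤ p * (f u / u ^ (p - 1) * ((u ^ p - 0) / p)) := by gcongr
    _ = f u * u := by
      have hr : u ^ (p - 1) ≠ 0 := (Real.rpow_pos_of_pos hu _).ne'
      rw [← Real.rpow_sub_one_mul_self hu.le (by linarith : p ≠ 0)]
      field_simp
      ring

lemma mul_integral_le_mul_self (hp : 1 < p) (hfc : Continuous f) (hf0 : f 0 = 0)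
    (hneg : MonotoneOn (fun u => f u / |u| ^ (p - 1)) (Iio 0))
    (hpos : MonotoneOn (fun u => f u / |u| ^ (p - 1)) (Ioi 0)) (u : ℝ) :
    p * ∫ t in (0:ℝ)..u, f t ≤ f u * u := by
  rcases lt_trichotomy u 0 with hu | rfl | hu
  · -- the positive case for `t ↦ -f (-t)` at `-u`
    have hrefl : MonotoneOn (fun t => -f (-t) / |t| ^ (p - 1)) (Ioi 0) := by
      intro a ha b hb hab
      have h := hneg (mem_Iio.2 (neg_lt_zero.2 hb)) (mem_Iio.2 (neg_lt_zero.2 ha)) (neg_le_neg hab)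
      simp only [abs_neg] at h
      simp only [neg_div]
      linarith
    have h := mul_integral_le_mul_self_of_pos hp (hfc.comp continuous_neg).neg (by simp [hf0])
      hrefl (neg_pos.2 hu)
    have hI : ∫ t in (0:ℝ)..-u, -f (-t) = ∫ t in (0:ℝ)..u, f t := by
      rw [intervalIntegral.integral_neg, intervalIntegral.integral_comp_neg, neg_neg, neg_zero,
        intervalIntegral.integral_symm, neg_neg]
    simpa [hI] using h
  · simp
  · exact mul_integral_le_mul_self_of_pos hp hfc hf0 hpos hu

lemma strictMonoOn_apply_mul_mul_div_rpow
    (hneg : StrictMonoOn (fun u => f u / |u| ^ (p - 1)) (Iio 0))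
    (hpos : StrictMonoOn (fun u => f u / |u| ^ (p - 1)) (Ioi 0)) {c : ℝ} (hc : c ≠ 0) :
    StrictMonoOn (fun s => f (s * c) * c / s ^ (p - 1)) (Ioi 0) := by
  have hc' : 0 < |c| ^ (p - 1) := Real.rpow_pos_of_pos (abs_pos.2 hc) _
  have key : ∀ s : ℝ, 0 < s →
      f (s * c) * c / s ^ (p - 1) = f (s * c) / |s * c| ^ (p - 1) * (|c| ^ (p - 1) * c) := by
    intro s hs
    have hs' : s ^ (p - 1) ≠ 0 := (Real.rpow_pos_of_pos hs _).ne'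
    rw [abs_mul, abs_of_pos hs, Real.mul_rpow hs.le (abs_nonneg c)]
    field_simp
  intro s₁ hs₁ s₂ hs₂ h
  simp only [key s₁ hs₁, key s₂ hs₂]
  rcases hc.lt_or_gt with hc | hc
  · exact mul_lt_mul_of_neg_right (hneg (mul_neg_of_pos_of_neg hs₂ hc)
      (mul_neg_of_pos_of_neg hs₁ hc) (mul_lt_mul_of_neg_right h hc)) (mul_neg_of_pos_of_neg hc' hc)
  · exact mul_lt_mul_of_pos_right (hpos (mul_pos hs₁ hc) (mul_pos hs₂ hc)
      (mul_lt_mul_of_pos_right h hc)) (mul_pos hc' hc)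

lemma zero_le_apply_mul_mul_div_rpow (hf : ∀ u, 0 ≤ f u * u) {s : ℝ} (hs : 0 < s) (c : ℝ) :
    0 ≤ f (s * c) * c / s ^ (p - 1) := by
  refine div_nonneg ((mul_nonneg_iff_of_pos_left hs).1 ?_) (Real.rpow_pos_of_pos hs _).le
  linarith [hf (s * c)]

end Scalar

lemma exists_abs_le_rpow_add_rpow {ι : Type*} {p q a : ℝ} {f : ι → ℝ → ℝ} (hq : 1 < q)
    (ha : 0 ≤ a) (hbound : ∀ x u, |f x u| ≤ a * (1 + |u| ^ (q - 1)))
    (hsmall : ∀ ε > 0, ∃ δ > 0, ∀ x u, |u| < δ → |f x u| ≤ ε * |u| ^ (p - 1)) :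
    ∃ C, 0 ≤ C ∧ ∀ x u, |f x u| ≤ |u| ^ (p - 1) + C * |u| ^ (q - 1) := by
  obtain ⟨δ, hδ, h⟩ := hsmall 1 one_pos
  have hδq : 0 < δ ^ (q - 1) := Real.rpow_pos_of_pos hδ _
  refine ⟨a / δ ^ (q - 1) + a, by positivity, fun x u => ?_⟩
  have hp' : 0 ≤ |u| ^ (p - 1) := by positivity
  rcases lt_or_ge |u| δ with hu | hu
  · have : 0 ≤ (a / δ ^ (q - 1) + a) * |u| ^ (q - 1) := by positivity
    linarith [h x u hu]
  · have hδu : δ ^ (q - 1) ≤ |u| ^ (q - 1) := Real.rpow_le_rpow hδ.le hu (by linarith)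
    have : a ≤ a / δ ^ (q - 1) * |u| ^ (q - 1) := by
      rw [div_mul_eq_mul_div, le_div_iff₀ hδq]
      exact mul_le_mul_of_nonneg_left hδu ha
    nlinarith [hbound x u]

section Ray

variable {ι : Type*} {p q C : ℝ} {f : ι → ℝ → ℝ} {w : ι → ℝ}

lemma memℓp_ofReal_iff_summable (hp : 0 < p) :
    Memℓp w (ENNReal.ofReal p) ↔ Summable fun x => |w x| ^ p := by
  rw [memℓp_gen_iff (by rwa [ENNReal.toReal_ofReal hp.le]), ENNReal.toReal_ofReal hp.le]
  rfl

lemma summable_abs_rpow_of_le (hp : 0 < p) (hpq : p ≤ q) (hw : Summable fun x => |w x| ^ p) :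
    Summable fun x => |w x| ^ q :=
  (memℓp_ofReal_iff_summable (hp.trans_le hpq)).1 <|
    ((memℓp_ofReal_iff_summable hp).2 hw).of_exponent_ge (ENNReal.ofReal_le_ofReal hpq)

lemma bddAbove_range_abs_of_summable (hp : 0 < p) (hw : Summable fun x => |w x| ^ p) :
    BddAbove (range fun x => |w x|) :=
  memℓp_infty_iff.1 (((memℓp_ofReal_iff_summable hp).2 hw).of_exponent_ge le_top)

lemma abs_apply_mul_mul_le (hp : 1 < p) (hq : 1 < q) (hC : 0 ≤ C)
    (hgrowth : ∀ x u, |f x u| ≤ |u| ^ (p - 1) + C * |u| ^ (q - 1)) {t b : ℝ} (htb : |t| ≤ b)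
    (x : ι) : |f x (t * w x) * w x| ≤ b ^ (p - 1) * |w x| ^ p + C * b ^ (q - 1) * |w x| ^ q := by
  have htp := Real.rpow_le_rpow (abs_nonneg t) htb (by linarith : 0 ≤ p - 1)
  have htq := Real.rpow_le_rpow (abs_nonneg t) htb (by linarith : 0 ≤ q - 1)
  rw [abs_mul]
  calc |f x (t * w x)| * |w x| ≤ (|t * w x| ^ (p - 1) + C * |t * w x| ^ (q - 1)) * |w x| := by
        gcongr; exact hgrowth x _
    _ = |t| ^ (p - 1) * (|w x| ^ (p - 1) * |w x|) + C * |t| ^ (q - 1) * (|w x| ^ (q - 1) * |w x|) := by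
        rw [abs_mul, Real.mul_rpow (abs_nonneg _) (abs_nonneg _),
          Real.mul_rpow (abs_nonneg _) (abs_nonneg _)]
        ring
    _ ≤ b ^ (p - 1) * |w x| ^ p + C * b ^ (q - 1) * |w x| ^ q := by
        rw [Real.rpow_sub_one_mul_self (abs_nonneg _) (by linarith),
          Real.rpow_sub_one_mul_self (abs_nonneg _) (by linarith)]
        gcongr

lemma summable_apply_mul_mul (hp : 1 < p) (hpq : p ≤ q) (hC : 0 ≤ C)
    (hgrowth : ∀ x u, |f x u| ≤ |u| ^ (p - 1) + C * |u| ^ (q - 1))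
    (hw : Summable fun x => |w x| ^ p) (t : ℝ) : Summable fun x => f x (t * w x) * w x :=
  .of_norm_bounded ((hw.mul_left _).add ((summable_abs_rpow_of_le (by linarith) hpq hw).mul_left _))
    fun x => abs_apply_mul_mul_le hp (by linarith) hC hgrowth le_rfl x

lemma hasDerivAt_tsum_integral_mul (hp : 1 < p) (hpq : p ≤ q) (hC : 0 ≤ C)
    (hgrowth : ∀ x u, |f x u| ≤ |u| ^ (p - 1) + C * |u| ^ (q - 1)) (hfc : ∀ x, Continuous (f x))
    (hw : Summable fun x => |w x| ^ p) (s : ℝ) :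
    HasDerivAt (fun t => ∑' x, ∫ u in (0:ℝ)..t * w x, f x u) (∑' x, f x (s * w x) * w x) s := by
  have hb : 0 < |s| + 1 := by positivity
  refine hasDerivAt_tsum_of_isPreconnected (g := fun x t => ∫ u in (0:ℝ)..t * w x, f x u)
    (g' := fun x t => f x (t * w x) * w x)
    (u := fun x => (|s| + 1) ^ (p - 1) * |w x| ^ p + C * (|s| + 1) ^ (q - 1) * |w x| ^ q)
    ((hw.mul_left _).add ((summable_abs_rpow_of_le (by linarith) hpq hw).mul_left _))
    Metric.isOpen_ball (convex_ball (0 : ℝ) (|s| + 1)).isPreconnected (fun x t _ => ?_)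
    (fun x t ht => ?_) (Metric.mem_ball_self hb) (by simp)
    (mem_ball_zero_iff.2 (by rw [Real.norm_eq_abs]; linarith))
  · exact ((hfc x).integral_hasStrictDerivAt 0 (t * w x)).hasDerivAt.comp t
      (hasDerivAt_mul_const (w x))
  · rw [mem_ball_zero_iff, Real.norm_eq_abs] at ht
    exact abs_apply_mul_mul_le hp (by linarith) hC hgrowth ht.le x

def nonlinearRatio (p : ℝ) (f : ι → ℝ → ℝ) (w : ι → ℝ) (s : ℝ) : ℝ :=
  ∑' x, f x (s * w x) * w x / s ^ (p - 1)

lemma nonlinearRatio_strictMonoOn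
    (hneg : ∀ x, StrictMonoOn (fun u => f x u / |u| ^ (p - 1)) (Iio 0))
    (hpos : ∀ x, StrictMonoOn (fun u => f x u / |u| ^ (p - 1)) (Ioi 0))
    (hsum : ∀ s, Summable fun x => f x (s * w x) * w x) (hw0 : w ≠ 0) :
    StrictMonoOn (nonlinearRatio p f w) (Ioi 0) := by
  obtain ⟨x₀, hx₀⟩ := Function.ne_iff.1 hw0
  have hmono : ∀ x, MonotoneOn (fun s => f x (s * w x) * w x / s ^ (p - 1)) (Ioi 0) := by
    intro x
    rcases eq_or_ne (w x) 0 with h | h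
    · simp [h, monotoneOn_const]
    · exact (strictMonoOn_apply_mul_mul_div_rpow (hneg x) (hpos x) h).monotoneOn
  intro s₁ hs₁ s₂ hs₂ h
  exact Summable.tsum_lt_tsum (fun x => hmono x hs₁ hs₂ h.le)
    (strictMonoOn_apply_mul_mul_div_rpow (hneg x₀) (hpos x₀) hx₀ hs₁ hs₂ h)
    ((hsum s₁).div_const _) ((hsum s₂).div_const _)

lemma tendsto_nonlinearRatio_nhdsGT_zero (hp : 0 < p)
    (hsmall : ∀ ε > 0, ∃ δ > 0, ∀ x u, |u| < δ → |f x u| ≤ ε * |u| ^ (p - 1))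
    (hw : Summable fun x => |w x| ^ p) :
    Tendsto (nonlinearRatio p f w) (𝓝[>] 0) (𝓝 0) := by
  obtain ⟨M, hM⟩ := bddAbove_range_abs_of_summable hp hw
  set S := ∑' x, |w x| ^ p
  have hS : 0 ≤ S := tsum_nonneg fun _ => by positivity
  refine Metric.tendsto_nhdsWithin_nhds.2 fun ε hε => ?_
  obtain ⟨δ, hδ, h⟩ := hsmall (ε / (S + 1)) (by positivity)
  refine ⟨δ / (|M| + 1), by positivity, fun {s} hs hsδ => ?_⟩
  have hs : 0 < s := hs
  rw [Real.dist_eq, sub_zero, abs_of_pos hs, lt_div_iff₀ (by positivity)] at hsδ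
  have hsp : 0 < s ^ (p - 1) := Real.rpow_pos_of_pos hs _
  have hterm : ∀ x, ‖f x (s * w x) * w x / s ^ (p - 1)‖ ≤ ε / (S + 1) * |w x| ^ p := by
    intro x
    have hsw : |s * w x| < δ := by
      rw [abs_mul, abs_of_pos hs]
      nlinarith [(hM ⟨x, rfl⟩ : |w x| ≤ M), le_abs_self M, abs_nonneg (w x)]
    rw [Real.norm_eq_abs, abs_div, abs_mul, abs_of_pos hsp, div_le_iff₀ hsp]
    calc |f x (s * w x)| * |w x| ≤ ε / (S + 1) * |s * w x| ^ (p - 1) * |w x| := by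
          gcongr; exact h x _ hsw
      _ = ε / (S + 1) * |w x| ^ p * s ^ (p - 1) := by
          rw [abs_mul, abs_of_pos hs, Real.mul_rpow hs.le (abs_nonneg _),
            ← Real.rpow_sub_one_mul_self (abs_nonneg (w x)) hp.ne']
          ring
  rw [Real.dist_eq, sub_zero]
  calc |nonlinearRatio p f w s| ≤ ε / (S + 1) * S := tsum_of_norm_bounded (hw.hasSum.mul_left _) hterm
    _ < ε := by
      rw [div_mul_eq_mul_div, div_lt_iff₀ (by positivity)]
      nlinarith

lemma tendsto_nonlinearRatio_atTop (hp : 0 < p) (hsum : ∀ s, Summable fun x => f x (s * w x) * w x)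
    (hsign : ∀ x u, 0 ≤ f x u * u) (hAR : ∀ x u, p * ∫ t in (0:ℝ)..u, f x t ≤ f x u * u)
    (hsuper : ∀ M : ℝ, ∃ R > 0, ∀ x u, R ≤ |u| → M ≤ (∫ t in (0:ℝ)..u, f x t) / |u| ^ p)
    (hw0 : w ≠ 0) : Tendsto (nonlinearRatio p f w) atTop atTop := by
  obtain ⟨x₀, hx₀⟩ := Function.ne_iff.1 hw0
  have hw₀ : 0 < |w x₀| := abs_pos.2 hx₀
  have hw₀p : 0 < |w x₀| ^ p := Real.rpow_pos_of_pos hw₀ _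
  refine tendsto_atTop.2 fun M => ?_
  obtain ⟨R, -, hRF⟩ := hsuper (M / (p * |w x₀| ^ p))
  filter_upwards [eventually_ge_atTop (R / |w x₀|), eventually_gt_atTop 0] with s hsR hs
  have hu : R ≤ |s * w x₀| := by
    rw [abs_mul, abs_of_pos hs]
    exact (div_le_iff₀ hw₀).1 hsR
  have hsw : 0 < |s * w x₀| := abs_pos.2 (mul_ne_zero hs.ne' hx₀)
  have hF := (le_div_iff₀ (Real.rpow_pos_of_pos hsw p)).1 (hRF x₀ _ hu)
  have key : M * s ^ p ≤ f x₀ (s * w x₀) * (s * w x₀) :=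
    calc M * s ^ p = p * (M / (p * |w x₀| ^ p) * |s * w x₀| ^ p) := by
          rw [abs_mul, abs_of_pos hs, Real.mul_rpow hs.le (abs_nonneg _)]
          field_simp
      _ ≤ p * ∫ t in (0:ℝ)..s * w x₀, f x₀ t := by gcongr
      _ ≤ f x₀ (s * w x₀) * (s * w x₀) := hAR x₀ _
  have hterm : M ≤ f x₀ (s * w x₀) * w x₀ / s ^ (p - 1) := by
    rw [le_div_iff₀ (Real.rpow_pos_of_pos hs _)]
    rw [← Real.rpow_sub_one_mul_self hs.le hp.ne'] at key
    nlinarith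
  exact hterm.trans <| ((hsum s).div_const _).le_tsum x₀ fun x _ =>
    zero_le_apply_mul_mul_div_rpow (hsign x) hs (w x)

end Ray

lemma exists_max_of_hasDerivAt_eq_mul {φ φ' c g : ℝ → ℝ} {t₁ t₂ : ℝ} (ht₁ : 0 < t₁)
    (ht₁₂ : t₁ < t₂) (hφ : ∀ s, 0 < s → HasDerivAt φ (φ' s) s)
    (hφ' : ∀ s, 0 < s → φ' s = c s * g s) (hc : ∀ s, 0 < s → 0 < c s)
    (hg : StrictAntiOn g (Ioi 0)) (hg₁ : 0 < g t₁) (hg₂ : g t₂ < 0) :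
    ∃ s₀, 0 < s₀ ∧ (∀ s, 0 < s → s ≠ s₀ → φ s < φ s₀) ∧ (∀ s, 0 < s → (φ' s = 0 ↔ s = s₀)) ∧
      StrictMonoOn φ (Ioc 0 s₀) ∧ StrictAntiOn φ (Ici s₀) := by
  have ht₂ : 0 < t₂ := ht₁.trans ht₁₂
  obtain ⟨s₀, ⟨hs₀₁, -⟩, hs₀⟩ := exists_hasDerivWithinAt_eq_of_lt_of_gt ht₁₂.le
    (fun s hs => (hφ s (ht₁.trans_le hs.1)).hasDerivWithinAt)
    (by rw [hφ' t₁ ht₁]; exact mul_pos (hc t₁ ht₁) hg₁)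
    (by rw [hφ' t₂ ht₂]; exact mul_neg_of_pos_of_neg (hc t₂ ht₂) hg₂)
  have hs₀pos : 0 < s₀ := ht₁.trans hs₀₁
  have hcrit : ∀ s, 0 < s → (φ' s = 0 ↔ g s = 0) := fun s hs => by
    rw [hφ' s hs, mul_eq_zero, or_iff_right (hc s hs).ne']
  have hgs₀ : g s₀ = 0 := (hcrit s₀ hs₀pos).1 hs₀
  have hcont : ContinuousOn φ (Ioi 0) := fun s hs => (hφ s hs).continuousAt.continuousWithinAt
  have hmono : StrictMonoOn φ (Ioc 0 s₀) := by
    refine strictMonoOn_of_deriv_pos (convex_Ioc 0 s₀) (hcont.mono Ioc_subset_Ioi_self)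
      fun s hs => ?_
    rw [interior_Ioc] at hs
    rw [(hφ s hs.1).deriv, hφ' s hs.1]
    exact mul_pos (hc s hs.1) (hgs₀ ▸ hg hs.1 hs₀pos hs.2)
  have hanti : StrictAntiOn φ (Ici s₀) := by
    refine strictAntiOn_of_deriv_neg (convex_Ici s₀)
      (hcont.mono fun s hs => hs₀pos.trans_le hs) fun s hs => ?_
    rw [interior_Ici] at hs
    have hs' : 0 < s := hs₀pos.trans hs
    rw [(hφ s hs').deriv, hφ' s hs']
    exact mul_neg_of_pos_of_neg (hc s hs') (hgs₀ ▸ hg hs₀pos hs' hs)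
  refine ⟨s₀, hs₀pos, fun s hs hne => ?_, fun s hs => ?_, hmono, hanti⟩
  · rcases hne.lt_or_gt with h | h
    · exact hmono ⟨hs, h.le⟩ ⟨hs₀pos, le_rfl⟩ h
    · exact hanti self_mem_Ici h.le h
  · rw [hcrit s hs]
    exact ⟨fun h => hg.injOn hs hs₀pos (h.trans hgs₀.symm), fun h => h ▸ hgs₀⟩

def periodAddSubgroup {G β : Type*} [AddCommGroup G] (V : G → β) : AddSubgroup G where
  carrier := {k | ∀ x, V (x + k) = V x}
  zero_mem' := by simp
  add_mem' {a b} ha hb x := by rw [← add_assoc, hb, ha]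
  neg_mem' {a} ha x := by rw [← ha (x + -a), neg_add_cancel_right]

lemma finite_range_of_periodic {N : ℕ} {β : Type*} {V : Vtx N → β} {T : ℕ} (hT : 0 < T)
    (hper : ∀ x (i : Fin N), V (x + (T : ℤ) • Pi.single i 1) = V x) : (range V).Finite := by
  have hmem : ∀ k : Vtx N, (T : ℤ) • k ∈ periodAddSubgroup V := by
    intro k
    rw [← Finset.univ_sum_single k, Finset.smul_sum]
    refine AddSubgroup.sum_mem _ fun i _ => ?_
    rw [show (T : ℤ) • (Pi.single i (k i) : Vtx N) = k i • ((T : ℤ) • (Pi.single i 1 : Vtx N)) by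
      ext j; by_cases h : j = i <;> simp [h, mul_comm]]
    exact AddSubgroup.zsmul_mem _ (show _ ∈ periodAddSubgroup V from (hper · i)) _
  have hT' : (0 : ℤ) < T := by exact_mod_cast hT
  refine ((Set.finite_Icc (0 : Vtx N) fun _ => (T : ℤ) - 1).image V).subset ?_
  rintro _ ⟨x, rfl⟩
  refine ⟨fun i => x i % T, ⟨fun i => Int.emod_nonneg _ hT'.ne', fun i => ?_⟩, ?_⟩
  · have := Int.emod_lt_of_pos (x i) hT'
    simp only
    omega
  · rw [← hmem (fun i => x i / T) (fun i => x i % T)]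
    congr 1
    ext i
    simp only [Pi.add_apply, Pi.smul_apply, smul_eq_mul]
    exact Int.emod_add_mul_ediv (x i) T

section Lattice

variable {N : ℕ} {p : ℝ} {V : Vtx N → ℝ} {f : Vtx N → ℝ → ℝ} {w : Vtx N → ℝ} {s : ℝ}

lemma eNormP_pos (hV : ∀ x, 0 < V x) (hVb : BddAbove (range V)) (hw : memE N p w)
    (hw0 : w ≠ 0) : 0 < eNormP N p V w := by
  obtain ⟨x₀, hx₀⟩ := Function.ne_iff.1 hw0
  obtain ⟨V₂, hV₂⟩ := hVb
  have hnn : ∀ x, 0 ≤ V x * |w x| ^ p := fun x => mul_nonneg (hV x).le (by positivity)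
  have hsum : Summable fun x => V x * |w x| ^ p :=
    .of_nonneg_of_le hnn (fun x => mul_le_mul_of_nonneg_right (hV₂ ⟨x, rfl⟩) (by positivity))
      (hw.mul_left V₂)
  have hE : 0 ≤ pEnergy N p w :=
    mul_nonneg (by norm_num) (tsum_nonneg fun z => by split_ifs <;> positivity)
  exact add_pos_of_nonneg_of_pos hE
    (hsum.tsum_pos hnn x₀ (mul_pos (hV x₀) (Real.rpow_pos_of_pos (abs_pos.2 hx₀) _)))

lemma eNormP_smul (hs : 0 ≤ s) : eNormP N p V (s • w) = s ^ p * eNormP N p V w := by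
  simp only [eNormP, pEnergy, Pi.smul_apply, smul_eq_mul, ← mul_sub, abs_mul,
    abs_of_nonneg hs, Real.mul_rpow hs (abs_nonneg _), ← mul_ite_zero, mul_left_comm (V _),
    tsum_mul_left]
  ring

lemma PhiFun_smul (hs : 0 ≤ s) :
    PhiFun N p V f (s • w) = s ^ p / p * eNormP N p V w - ∑' x, Fprim f x (s * w x) := by
  rw [PhiFun, eNormP_smul hs]
  simp only [Pi.smul_apply, smul_eq_mul]
  ring

lemma PhiDeriv_smul_self (hp : p ≠ 0) (hs : 0 < s) :
    PhiDeriv N p V f (s • w) w = s ^ (p - 1) * eNormP N p V w - ∑' x, f x (s * w x) * w x := by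
  simp only [PhiDeriv, gradPair, eNormP, pEnergy, Pi.smul_apply, smul_eq_mul, ← mul_sub,
    mul_assoc (V _), abs_mul_rpow_sub_two_mul_mul hp hs, abs_sub_comm (w _) (w _),
    ← mul_ite_zero, tsum_mul_left]
  simp only [mul_left_comm (V _), tsum_mul_left]
  ring

lemma PhiDeriv_smul_self_eq_mul (hp : p ≠ 0) (hs : 0 < s) :
    PhiDeriv N p V f (s • w) w = s ^ (p - 1) * (eNormP N p V w - nonlinearRatio p f w s) := by
  have hs' : s ^ (p - 1) ≠ 0 := (Real.rpow_pos_of_pos hs _).ne'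
  rw [PhiDeriv_smul_self hp hs, nonlinearRatio, tsum_div_const]
  field_simp

lemma hasDerivAt_PhiFun_smul {q C : ℝ} (hp : 1 < p) (hpq : p ≤ q) (hC : 0 ≤ C)
    (hgrowth : ∀ x u, |f x u| ≤ |u| ^ (p - 1) + C * |u| ^ (q - 1)) (hfc : ∀ x, Continuous (f x))
    (hw : memE N p w) (hs : 0 < s) :
    HasDerivAt (fun t => PhiFun N p V f (t • w)) (PhiDeriv N p V f (s • w) w) s := by
  have h := (((Real.hasDerivAt_rpow_const (p := p) (Or.inl hs.ne')).div_const p).mul_const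
    (eNormP N p V w)).sub (hasDerivAt_tsum_integral_mul hp hpq hC hgrowth hfc hw s)
  rw [mul_div_cancel_left₀ _ (by linarith : p ≠ 0), ← PhiDeriv_smul_self (by linarith) hs] at h
  exact h.congr_of_eventuallyEq <| by
    filter_upwards [lt_mem_nhds hs] with t ht using PhiFun_smul ht.le

end Lattice

theorem stmt_10_general (N : ℕ) (p q : ℝ) (hp : 1 < p) (hq : p < q)
    (V : Vtx N → ℝ) (f : Vtx N → ℝ → ℝ) (T : ℕ) (hT : 0 < T)
    (hA1 : ∃ a : ℝ, 0 < a ∧ ∀ x u, |f x u| ≤ a * (1 + |u| ^ (q - 1)))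
    (hfc : ∀ x, Continuous (f x))
    (hA2V : ∀ x (i : Fin N), V (x + (T : ℤ) • Pi.single i 1) = V x)
    (hVpos : ∀ x, 0 < V x)
    (hA3 : ∀ ε > (0:ℝ), ∃ δ > (0:ℝ), ∀ x u, |u| < δ → |f x u| ≤ ε * |u| ^ (p - 1))
    (hA4 : ∀ x, StrictMonoOn (fun u => f x u / |u| ^ (p - 1)) (Set.Iio 0) ∧
               StrictMonoOn (fun u => f x u / |u| ^ (p - 1)) (Set.Ioi 0))
    (hA5 : ∀ M : ℝ, ∃ R > (0:ℝ), ∀ x u, R ≤ |u| → M ≤ Fprim f x u / |u| ^ p)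
    (w : Vtx N → ℝ) (hw : memE N p w) (hw0 : w ≠ 0) :
    ∃ s_w : ℝ, 0 < s_w ∧
      (∀ s, 0 < s → s ≠ s_w →
        PhiFun N p V f (s • w) < PhiFun N p V f (s_w • w)) ∧
      (∀ s, 0 < s → (PhiDeriv N p V f (s • w) w = 0 ↔ s = s_w)) ∧
      StrictMonoOn (fun s => PhiFun N p V f (s • w)) (Set.Ioc 0 s_w) ∧
      StrictAntiOn (fun s => PhiFun N p V f (s • w)) (Set.Ici s_w) := by
  obtain ⟨a, ha, hbound⟩ := hA1
  obtain ⟨C, hC, hgrowth⟩ := exists_abs_le_rpow_add_rpow (by linarith) ha.le hbound hA3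
  have hsmall x : ∀ ε > (0:ℝ), ∃ δ > (0:ℝ), ∀ u, |u| < δ → |f x u| ≤ ε * |u| ^ (p - 1) :=
    fun ε hε => (hA3 ε hε).imp fun _ ⟨hδ, h⟩ => ⟨hδ, h x⟩
  have hsign x := zero_le_mul_self_of_monotoneOn_div_rpow (hsmall x) (hA4 x).1.monotoneOn
    (hA4 x).2.monotoneOn
  have hAR x := mul_integral_le_mul_self hp (hfc x) (map_zero_of_abs_le_rpow hp.ne' (hsmall x))
    (hA4 x).1.monotoneOn (hA4 x).2.monotoneOn
  have hsum := summable_apply_mul_mul hp hq.le hC hgrowth hw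
  have hA := eNormP_pos hVpos (finite_range_of_periodic hT hA2V).bddAbove hw hw0
  obtain ⟨t₁, hD₁, ht₁⟩ := (((tendsto_nonlinearRatio_nhdsGT_zero (by linarith) hA3 hw).eventually
    (gt_mem_nhds hA)).and self_mem_nhdsWithin).exists
  obtain ⟨t₂, hD₂, ht₁₂⟩ := (((tendsto_nonlinearRatio_atTop (by linarith) hsum hsign hAR hA5
    hw0).eventually_gt_atTop _).and (eventually_gt_atTop t₁)).exists
  exact exists_max_of_hasDerivAt_eq_mul ht₁ ht₁₂
    (fun s hs => hasDerivAt_PhiFun_smul hp hq.le hC hgrowth hfc hw hs)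
    (fun s hs => PhiDeriv_smul_self_eq_mul (by linarith) hs) (fun s hs => Real.rpow_pos_of_pos hs _)
    (fun s₁ hs₁ s₂ hs₂ h => sub_lt_sub_left
      (nonlinearRatio_strictMonoOn (fun x => (hA4 x).1) (fun x => (hA4 x).2) hsum hw0 hs₁ hs₂ h) _)
    (sub_pos.2 hD₁) (sub_neg.2 hD₂)

/-- for each w ≠ 0, s ↦ Φ(sw) has a unique maximum point on (0,∞),
which is the unique positive critical point of the fibering map. -/
theorem stmt_10 (N : ℕ) (p q : ℝ) (hp : 1 < p) (hq : p < q)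
    (V : Vtx N → ℝ) (f : Vtx N → ℝ → ℝ) (T : ℕ) (hT : 0 < T)
    (hA1 : ∃ a : ℝ, 0 < a ∧ ∀ x u, |f x u| ≤ a * (1 + |u| ^ (q - 1)))
    (hfc : ∀ x, Continuous (f x))
    (hA2V : ∀ x (i : Fin N), V (x + (T : ℤ) • Pi.single i 1) = V x)
    (hA2f : ∀ x (i : Fin N) (u : ℝ), f (x + (T : ℤ) • Pi.single i 1) u = f x u)
    (hVpos : ∀ x, 0 < V x)
    (hA3 : ∀ ε > (0:ℝ), ∃ δ > (0:ℝ), ∀ x u, |u| < δ → |f x u| ≤ ε * |u| ^ (p - 1))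
    (hA4 : ∀ x, StrictMonoOn (fun u => f x u / |u| ^ (p - 1)) (Set.Iio 0) ∧
               StrictMonoOn (fun u => f x u / |u| ^ (p - 1)) (Set.Ioi 0))
    (hA5 : ∀ M : ℝ, ∃ R > (0:ℝ), ∀ x u, R ≤ |u| → M ≤ Fprim f x u / |u| ^ p)
    (w : Vtx N → ℝ) (hw : memE N p w) (hw0 : w ≠ 0) :
    ∃ s_w : ℝ, 0 < s_w ∧
      (∀ s, 0 < s → s ≠ s_w →
        PhiFun N p V f (s • w) < PhiFun N p V f (s_w • w)) ∧
      (∀ s, 0 < s → (PhiDeriv N p V f (s • w) w = 0 ↔ s = s_w)) ∧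
      StrictMonoOn (fun s => PhiFun N p V f (s • w)) (Set.Ioc 0 s_w) ∧
      StrictAntiOn (fun s => PhiFun N p V f (s • w)) (Set.Ici s_w) :=
  stmt_10_general N p q hp hq V f T hT hA1 hfc hA2V hVpos hA3 hA4 hA5 w hw hw0
end
end

section
/- With E, Φ, 𝒩 as above and assumptions (A₁)–(A₅), Φ is coercive on the Nehari manifold: if {u_n} ⊂ 𝒩 with ‖u_n‖ → ∞, then Φ(u_n) → ∞. -/
open scoped BigOperators
open Filter Topology

noncomputable section

/-!
On the Nehari manifold `‖u‖^p = ∑ₓ f(x,u)u`, so `Φ(u) = ∑ₓ Ψₓ(u x)` with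
`Ψₓ(σ) = f(x,σ)σ/p − F(x,σ)`. For `σ > 0`, (A₄) gives `f(x,τ) ≤ (f(x,σ)/σ^{p-1}) τ^{p-1}` on
`(0, σ)`, whence `Ψₓ(σ) ≥ H c^p/p − |F(x,c)|` for `0 ≤ c ≤ σ`, where `H = f(x,σ)σ/|σ|^p`; the
case `σ < 0` follows by the reflection `t ↦ -f(x,-t)`. With `c = 0` this gives `Ψₓ ≥ 0`; with
(A₃) controlling `F` near `0` and (A₅) making `H` large, `Ψₓ(σ) → ∞` as `|σ| → ∞`, uniformly
in `x`. So `Φ(u) ≤ C` forces `|u x| ≤ R`, and on that range the same inequality, solved for `H`,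
yields `f(x,σ)σ ≤ (V₀/2)|σ|^p + μ Ψₓ(σ)` with `V₀ = min V > 0` (periodicity). Summing,
`‖u‖^p ≤ ½‖u‖^p + μC`.
-/

open Set intervalIntegral

lemma abs_rpow_sub_one_mul_abs {p : ℝ} (hp : p ≠ 0) (σ : ℝ) : |σ| ^ (p - 1) * |σ| = |σ| ^ p := by
  conv_rhs => rw [← sub_add_cancel p 1, Real.rpow_add' (abs_nonneg σ) (by simpa using hp),
    Real.rpow_one]

lemma abs_rpow_sub_two_mul_self_mul_self {p : ℝ} (hp : p ≠ 0) (d : ℝ) :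
    |d| ^ (p - 2) * d * d = |d| ^ p := by
  rw [mul_assoc, ← abs_mul_abs_self d, ← sq, ← Real.rpow_two, ← Real.rpow_add' (abs_nonneg d)
    (by simpa using hp), sub_add_cancel]

lemma abs_integral_le_mul_abs_rpow {f : ℝ → ℝ} {p ε t : ℝ} (hp : 1 ≤ p) (hε : 0 ≤ ε)
    (hf : ∀ s, |s| ≤ |t| → |f s| ≤ ε * |s| ^ (p - 1)) :
    |∫ s in (0 : ℝ)..t, f s| ≤ ε * |t| ^ p := by
  have hbound : ∀ s ∈ uIoc 0 t, ‖f s‖ ≤ ε * |t| ^ (p - 1) := by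
    intro s hs
    have hst : |s| ≤ |t| := by
      rcases mem_uIoc.1 hs with ⟨h1, h2⟩ | ⟨h1, h2⟩ <;>
        simp only [abs_le] <;> constructor <;> linarith [le_abs_self t, neg_abs_le t]
    exact (hf s hst).trans
      (mul_le_mul_of_nonneg_left (Real.rpow_le_rpow (abs_nonneg s) hst (by linarith)) hε)
  calc |∫ s in (0 : ℝ)..t, f s| ≤ ε * |t| ^ (p - 1) * |t - 0| :=
        norm_integral_le_of_norm_le_const hbound
    _ = ε * |t| ^ p := by rw [sub_zero, mul_assoc, abs_rpow_sub_one_mul_abs (by linarith)]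

def nehariDefect (p : ℝ) (f : ℝ → ℝ) (σ : ℝ) : ℝ := f σ * σ / p - ∫ τ in (0 : ℝ)..σ, f τ

lemma le_nehariDefect_of_pos {p c σ : ℝ} {f : ℝ → ℝ} (hp : 0 < p) (hf : Continuous f)
    (hmono : MonotoneOn (fun t => f t / |t| ^ (p - 1)) (Ioi 0))
    (hc : 0 ≤ c) (hcσ : c ≤ σ) (hσ : 0 < σ) :
    f σ * σ / |σ| ^ p * c ^ p / p - |∫ τ in (0 : ℝ)..c, f τ| ≤ nehariDefect p f σ := by
  set A := f σ / σ ^ (p - 1)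
  have hσp : σ ^ (p - 1) * σ = σ ^ p := by
    simpa [abs_of_pos hσ] using abs_rpow_sub_one_mul_abs hp.ne' σ
  have hA : f σ * σ / |σ| ^ p = A := by
    rw [abs_of_pos hσ, ← hσp, mul_div_mul_right _ _ hσ.ne']
  have hAσ : A * σ ^ p = f σ * σ := by
    rw [← hσp, div_mul_eq_mul_div, mul_div_assoc,
      mul_div_cancel_left₀ _ (Real.rpow_pos_of_pos hσ _).ne']
  have hle : ∀ τ ∈ Ioo c σ, f τ ≤ A * τ ^ (p - 1) := by
    intro τ ⟨hcτ, hτσ⟩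
    have hτ : 0 < τ := hc.trans_lt hcτ
    have h := hmono hτ hσ hτσ.le
    simp only [abs_of_pos hτ, abs_of_pos hσ] at h
    rwa [div_le_iff₀ (Real.rpow_pos_of_pos hτ _)] at h
  have hupper : ∫ τ in c..σ, f τ ≤ A * ((σ ^ p - c ^ p) / p) := by
    calc ∫ τ in c..σ, f τ ≤ ∫ τ in c..σ, A * τ ^ (p - 1) :=
          integral_mono_on_of_le_Ioo hcσ (hf.intervalIntegrable _ _)
            ((intervalIntegrable_rpow' (by linarith)).const_mul A) hle
      _ = A * ((σ ^ p - c ^ p) / p) := by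
          rw [integral_const_mul, integral_rpow (Or.inl (by linarith)), sub_add_cancel]
  have hsplit := integral_add_adjacent_intervals
    (hf.intervalIntegrable (μ := MeasureTheory.volume) 0 c) (hf.intervalIntegrable c σ)
  have hsmall := le_abs_self (∫ τ in (0 : ℝ)..c, f τ)
  rw [nehariDefect, ← hsplit, hA, ← hAσ]
  have : A * ((σ ^ p - c ^ p) / p) = A * σ ^ p / p - A * c ^ p / p := by ring
  linarith

lemma nehariDefect_neg_comp_neg (p : ℝ) (f : ℝ → ℝ) (σ : ℝ) :
    nehariDefect p (fun t => -f (-t)) (-σ) = nehariDefect p f σ := by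
  simp [nehariDefect, intervalIntegral.integral_neg, integral_comp_neg, integral_symm (a := σ)]

lemma monotoneOn_neg_comp_neg_div {p : ℝ} {f : ℝ → ℝ}
    (hmono : MonotoneOn (fun t => f t / |t| ^ (p - 1)) (Iio 0)) :
    MonotoneOn (fun t => -f (-t) / |t| ^ (p - 1)) (Ioi 0) := by
  intro s hs t ht hst
  have h := hmono (mem_Iio.2 (neg_lt_zero.2 ht)) (mem_Iio.2 (neg_lt_zero.2 hs)) (neg_le_neg hst)
  simp only [abs_neg] at h
  simp only [neg_div]
  exact neg_le_neg h

lemma le_nehariDefect {p c σ E : ℝ} {f : ℝ → ℝ} (hp : 0 < p) (hf : Continuous f)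
    (hmono_neg : MonotoneOn (fun t => f t / |t| ^ (p - 1)) (Iio 0))
    (hmono_pos : MonotoneOn (fun t => f t / |t| ^ (p - 1)) (Ioi 0))
    (hσ : σ ≠ 0) (hc : 0 ≤ c) (hcσ : c ≤ |σ|)
    (hE : ∀ t, |t| ≤ c → |∫ τ in (0 : ℝ)..t, f τ| ≤ E) :
    f σ * σ / |σ| ^ p * c ^ p / p - E ≤ nehariDefect p f σ := by
  rcases hσ.lt_or_gt with hneg | hpos
  · have h := le_nehariDefect_of_pos hp (by fun_prop) (monotoneOn_neg_comp_neg_div hmono_neg) hc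
      (by rwa [abs_of_neg hneg] at hcσ) (neg_pos.2 hneg)
    have hEc := hE (-c) (by rw [abs_neg, abs_of_nonneg hc])
    simp only [nehariDefect_neg_comp_neg, neg_neg, abs_neg, neg_mul_neg,
      intervalIntegral.integral_neg, integral_comp_neg, neg_zero] at h
    rw [integral_symm 0 (-c), abs_neg] at h
    linarith
  · have h := le_nehariDefect_of_pos hp hf hmono_pos hc (by rwa [abs_of_pos hpos] at hcσ) hpos
    linarith [hE c (by rw [abs_of_nonneg hc])]

lemma nehariDefect_nonneg {p : ℝ} {f : ℝ → ℝ} (hp : 0 < p) (hf : Continuous f)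
    (hmono_neg : MonotoneOn (fun t => f t / |t| ^ (p - 1)) (Iio 0))
    (hmono_pos : MonotoneOn (fun t => f t / |t| ^ (p - 1)) (Ioi 0)) (σ : ℝ) :
    0 ≤ nehariDefect p f σ := by
  rcases eq_or_ne σ 0 with rfl | hσ
  · simp [nehariDefect]
  · have hE : ∀ t, |t| ≤ 0 → |∫ τ in (0 : ℝ)..t, f τ| ≤ 0 := fun t ht => by
      simp [abs_nonpos_iff.1 ht]
    simpa [Real.zero_rpow hp.ne'] using
      le_nehariDefect hp hf hmono_neg hmono_pos hσ le_rfl (abs_nonneg σ) hE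

lemma le_nehariDefect_of_abs_le_mul_rpow {p c ε σ : ℝ} {f : ℝ → ℝ} (hp : 1 ≤ p)
    (hf : Continuous f)
    (hmono_neg : MonotoneOn (fun t => f t / |t| ^ (p - 1)) (Iio 0))
    (hmono_pos : MonotoneOn (fun t => f t / |t| ^ (p - 1)) (Ioi 0))
    (hε : 0 ≤ ε) (hc : 0 < c) (hcσ : c ≤ |σ|)
    (hsmall : ∀ s, |s| ≤ c → |f s| ≤ ε * |s| ^ (p - 1)) :
    f σ * σ / |σ| ^ p * c ^ p / p - ε * c ^ p ≤ nehariDefect p f σ := by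
  refine le_nehariDefect (by linarith) hf hmono_neg hmono_pos ?_ hc.le hcσ fun t ht => ?_
  · rintro rfl
    simp only [abs_zero] at hcσ
    linarith
  · calc |∫ τ in (0 : ℝ)..t, f τ| ≤ ε * |t| ^ p :=
          abs_integral_le_mul_abs_rpow hp hε fun s hs => hsmall s (hs.trans ht)
      _ ≤ ε * c ^ p :=
          mul_le_mul_of_nonneg_left (Real.rpow_le_rpow (abs_nonneg t) ht (by linarith)) hε

section UniformFamily

variable {ι : Type*} {p : ℝ} {f : ι → ℝ → ℝ}

lemma exists_le_nehariDefect (hp : 1 ≤ p) (hf : ∀ i, Continuous (f i))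
    (hmono_neg : ∀ i, MonotoneOn (fun t => f i t / |t| ^ (p - 1)) (Iio 0))
    (hmono_pos : ∀ i, MonotoneOn (fun t => f i t / |t| ^ (p - 1)) (Ioi 0))
    (hsmall : ∀ ε > (0 : ℝ), ∃ δ > (0 : ℝ), ∀ i u, |u| < δ → |f i u| ≤ ε * |u| ^ (p - 1))
    (hlarge : ∀ M : ℝ, ∃ R > (0 : ℝ), ∀ i u, R ≤ |u| → M ≤ (∫ s in (0 : ℝ)..u, f i s) / |u| ^ p)
    (K : ℝ) : ∃ R > (0 : ℝ), ∀ i σ, R ≤ |σ| → K ≤ nehariDefect p (f i) σ := by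
  obtain ⟨δ, hδ, hδsmall⟩ := hsmall 1 one_pos
  obtain ⟨c, hc, hcδ⟩ : ∃ c, 0 < c ∧ c < δ := ⟨δ / 2, half_pos hδ, half_lt_self hδ⟩
  have hcp : 0 < c ^ p := Real.rpow_pos_of_pos hc p
  obtain ⟨R, hR, hRlarge⟩ := hlarge ((K + c ^ p) / c ^ p)
  refine ⟨max R c, lt_max_of_lt_left hR, fun i σ hσ => ?_⟩
  have hcσ : c ≤ |σ| := (le_max_right R c).trans hσ
  have hσp : 0 < |σ| ^ p := Real.rpow_pos_of_pos (hc.trans_le hcσ) p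
  have hlow := le_nehariDefect_of_abs_le_mul_rpow hp (hf i) (hmono_neg i) (hmono_pos i)
    zero_le_one hc hcσ fun s hs => hδsmall i s (by linarith)
  have hF : (K + c ^ p) / c ^ p ≤ (∫ s in (0 : ℝ)..σ, f i s) / |σ| ^ p :=
    hRlarge i σ ((le_max_left R c).trans hσ)
  have hFΨ : (∫ s in (0 : ℝ)..σ, f i s) / |σ| ^ p ≤ f i σ * σ / |σ| ^ p / p := by
    rw [div_right_comm]
    have := nehariDefect_nonneg (by linarith) (hf i) (hmono_neg i) (hmono_pos i) σ
    exact div_le_div_of_nonneg_right (by rw [nehariDefect] at this; linarith) hσp.le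
  have hKc : K + c ^ p ≤ f i σ * σ / |σ| ^ p / p * c ^ p := by
    rw [← div_le_iff₀ hcp]
    exact hF.trans hFΨ
  have : f i σ * σ / |σ| ^ p / p * c ^ p = f i σ * σ / |σ| ^ p * c ^ p / p := by ring
  linarith

lemma exists_mul_self_le_add_nehariDefect (hp : 1 ≤ p) (hf : ∀ i, Continuous (f i))
    (hmono_neg : ∀ i, MonotoneOn (fun t => f i t / |t| ^ (p - 1)) (Iio 0))
    (hmono_pos : ∀ i, MonotoneOn (fun t => f i t / |t| ^ (p - 1)) (Ioi 0))
    (hsmall : ∀ ε > (0 : ℝ), ∃ δ > (0 : ℝ), ∀ i u, |u| < δ → |f i u| ≤ ε * |u| ^ (p - 1))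
    {ε : ℝ} (hε : 0 < ε) (R : ℝ) :
    ∃ μ ≥ (0 : ℝ), ∀ i σ, |σ| ≤ R → f i σ * σ ≤ ε * |σ| ^ p + μ * nehariDefect p (f i) σ := by
  have hp0 : 0 < p := by linarith
  obtain ⟨δ, hδ, hδsmall⟩ := hsmall (ε / p) (div_pos hε hp0)
  obtain ⟨c, hc, hcδ⟩ : ∃ c, 0 < c ∧ c < δ := ⟨δ / 2, half_pos hδ, half_lt_self hδ⟩
  have hcp : 0 < c ^ p := Real.rpow_pos_of_pos hc p
  refine ⟨p * |R| ^ p / c ^ p, by positivity, fun i σ hσR => ?_⟩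
  have hΨ := nehariDefect_nonneg hp0 (hf i) (hmono_neg i) (hmono_pos i) σ
  have hσp : 0 ≤ |σ| ^ p := Real.rpow_nonneg (abs_nonneg σ) p
  rcases lt_or_ge |σ| c with hσc | hcσ
  · have hεp : ε / p ≤ ε := div_le_self hε.le hp
    calc f i σ * σ ≤ |f i σ| * |σ| := by rw [← abs_mul]; exact le_abs_self _
      _ ≤ ε / p * |σ| ^ (p - 1) * |σ| :=
          mul_le_mul_of_nonneg_right (hδsmall i σ (by linarith)) (abs_nonneg σ)
      _ = ε / p * |σ| ^ p := by rw [mul_assoc, abs_rpow_sub_one_mul_abs hp0.ne']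
      _ ≤ ε * |σ| ^ p + p * |R| ^ p / c ^ p * nehariDefect p (f i) σ := by
          nlinarith [mul_nonneg (by positivity : 0 ≤ p * |R| ^ p / c ^ p) hΨ]
  · set H := f i σ * σ / |σ| ^ p
    have hσ0 : 0 < |σ| ^ p := Real.rpow_pos_of_pos (hc.trans_le hcσ) p
    have hlow := le_nehariDefect_of_abs_le_mul_rpow hp (hf i) (hmono_neg i) (hmono_pos i)
      (div_pos hε hp0).le hc hcσ fun s hs => hδsmall i s (by linarith)
    have hH : H ≤ p * nehariDefect p (f i) σ / c ^ p + ε := by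
      rw [div_add' _ _ _ hcp.ne', le_div_iff₀ hcp]
      have : H * c ^ p / p ≤ nehariDefect p (f i) σ + ε / p * c ^ p := by linarith
      rw [div_le_iff₀ hp0] at this
      calc H * c ^ p ≤ (nehariDefect p (f i) σ + ε / p * c ^ p) * p := this
        _ = p * nehariDefect p (f i) σ + ε * c ^ p := by field_simp
    have hσR : |σ| ^ p ≤ |R| ^ p :=
      Real.rpow_le_rpow (abs_nonneg σ) (hσR.trans (le_abs_self R)) hp0.le
    calc f i σ * σ = H * |σ| ^ p := (div_mul_cancel₀ _ hσ0.ne').symm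
      _ ≤ (p * nehariDefect p (f i) σ / c ^ p + ε) * |σ| ^ p := mul_le_mul_of_nonneg_right hH hσp
      _ = ε * |σ| ^ p + p * nehariDefect p (f i) σ / c ^ p * |σ| ^ p := by ring
      _ ≤ ε * |σ| ^ p + p * nehariDefect p (f i) σ / c ^ p * |R| ^ p := by gcongr
      _ = ε * |σ| ^ p + p * |R| ^ p / c ^ p * nehariDefect p (f i) σ := by ring

lemma exists_abs_le_mul_rpow_of_abs_le {q a : ℝ} (hp : 1 ≤ p) (hq : 1 ≤ q) (ha : 0 ≤ a)
    (hgrowth : ∀ i u, |f i u| ≤ a * (1 + |u| ^ (q - 1)))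
    (hsmall : ∀ ε > (0 : ℝ), ∃ δ > (0 : ℝ), ∀ i u, |u| < δ → |f i u| ≤ ε * |u| ^ (p - 1))
    (M : ℝ) : ∃ C ≥ 0, ∀ i t, |t| ≤ M → |f i t| ≤ C * |t| ^ (p - 1) := by
  obtain ⟨δ, hδ, hδsmall⟩ := hsmall 1 one_pos
  refine ⟨max 1 (a * (1 + M ^ (q - 1)) / δ ^ (p - 1)), zero_le_one.trans (le_max_left _ _),
    fun i t htM => ?_⟩
  have htp : 0 ≤ |t| ^ (p - 1) := Real.rpow_nonneg (abs_nonneg t) _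
  rcases lt_or_ge |t| δ with htδ | hδt
  · exact (hδsmall i t htδ).trans (mul_le_mul_of_nonneg_right (le_max_left _ _) htp)
  · have hδp : 0 < δ ^ (p - 1) := Real.rpow_pos_of_pos hδ _
    have hqM : |t| ^ (q - 1) ≤ M ^ (q - 1) :=
      Real.rpow_le_rpow (abs_nonneg t) htM (by linarith)
    calc |f i t| ≤ a * (1 + M ^ (q - 1)) := (hgrowth i t).trans (by gcongr)
      _ = a * (1 + M ^ (q - 1)) / δ ^ (p - 1) * δ ^ (p - 1) := (div_mul_cancel₀ _ hδp.ne').symm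
      _ ≤ a * (1 + M ^ (q - 1)) / δ ^ (p - 1) * |t| ^ (p - 1) := by
          gcongr
          have : 0 ≤ M ^ (q - 1) := Real.rpow_nonneg ((abs_nonneg t).trans htM) _
          positivity
      _ ≤ _ := mul_le_mul_of_nonneg_right (le_max_right _ _) htp

end UniformFamily

section Periodic

variable {ι α : Type*} [Finite ι] [DecidableEq ι]

lemma apply_add_zsmul_of_periodic {V : (ι → ℤ) → α} {T : ℤ}
    (hV : ∀ x i, V (x + T • Pi.single i 1) = V x) (z x : ι → ℤ) : V (x + T • z) = V x := by
  induction z using Pi.single_induction generalizing x with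
  | zero => simp
  | add z w hz hw => rw [smul_add, ← add_assoc, hw, hz]
  | single i m =>
    induction m using Int.induction_on generalizing x with
    | zero => simp
    | succ m ih => rw [Pi.single_add, smul_add, ← add_assoc, hV, ih]
    | pred m ih =>
      rw [← hV, add_assoc, ← smul_add, ← Pi.single_add, sub_add_cancel, ih]

lemma finite_range_of_periodic_s13 {V : (ι → ℤ) → α} {T : ℕ} (hT : 0 < T)
    (hV : ∀ x i, V (x + (T : ℤ) • Pi.single i 1) = V x) : (range V).Finite := by
  have hT' : (0 : ℤ) < T := by exact_mod_cast hT
  refine ((Finite.pi fun _ => finite_Ico (0 : ℤ) T).image V).subset ?_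
  rintro _ ⟨x, rfl⟩
  refine ⟨fun i => x i % T, fun i _ => ⟨Int.emod_nonneg _ hT'.ne', Int.emod_lt_of_pos _ hT'⟩, ?_⟩
  have hx : x = (fun i => x i % T) + (T : ℤ) • fun i => x i / T := by
    ext i
    simp [Int.emod_add_mul_ediv]
  rw [hx, apply_add_zsmul_of_periodic hV, ← hx]

lemma exists_pos_bounds_of_periodic {V : (ι → ℤ) → ℝ} {T : ℕ} (hT : 0 < T)
    (hV : ∀ x i, V (x + (T : ℤ) • Pi.single i 1) = V x) (hpos : ∀ x, 0 < V x) :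
    ∃ V₀ > 0, ∃ V₁, ∀ x, V₀ ≤ V x ∧ V x ≤ V₁ := by
  have hfin := finite_range_of_periodic_s13 hT hV
  obtain ⟨_, ⟨y, rfl⟩, hy⟩ := exists_min_image (range V) id hfin (range_nonempty V)
  obtain ⟨V₁, hV₁⟩ := hfin.bddAbove
  exact ⟨V y, hpos y, V₁, fun x => ⟨hy _ ⟨x, rfl⟩, hV₁ ⟨x, rfl⟩⟩⟩

end Periodic

section Functional

variable {N : ℕ} {p : ℝ} {V : Vtx N → ℝ} {f : Vtx N → ℝ → ℝ} {u : Vtx N → ℝ}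

lemma pEnergy_nonneg : 0 ≤ pEnergy N p u :=
  mul_nonneg one_half_pos.le <| tsum_nonneg fun z => by
    split_ifs
    exacts [Real.rpow_nonneg (abs_nonneg _) p, le_rfl]

lemma eNormP_nonneg (hV : ∀ x, 0 ≤ V x) : 0 ≤ eNormP N p V u :=
  add_nonneg pEnergy_nonneg <|
    tsum_nonneg fun x => mul_nonneg (hV x) (Real.rpow_nonneg (abs_nonneg _) p)

lemma gradPair_self (hp : p ≠ 0) : gradPair N p u u = pEnergy N p u := by
  unfold gradPair pEnergy
  congr 1
  refine tsum_congr fun z => ?_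
  split_ifs
  · rw [abs_rpow_sub_two_mul_self_mul_self hp, abs_sub_comm]
  · rfl

lemma PhiDeriv_self (hp : p ≠ 0) :
    PhiDeriv N p V f u u = eNormP N p V u - ∑' x, f x (u x) * u x := by
  have hpot : ∀ x, V x * |u x| ^ (p - 2) * u x * u x = V x * |u x| ^ p := fun x => by
    rw [mul_assoc, mul_assoc, ← mul_assoc _ (u x), abs_rpow_sub_two_mul_self_mul_self hp]
  simp only [PhiDeriv, eNormP, gradPair_self hp, hpot]

lemma eNormP_eq_tsum_of_mem_Nehari (hp : p ≠ 0) (hu : u ∈ Nehari N p V f) :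
    eNormP N p V u = ∑' x, f x (u x) * u x := by
  have h := hu.2.2
  rw [PhiDeriv_self hp] at h
  linarith

lemma PhiFun_eq_tsum_nehariDefect (hNeh : eNormP N p V u = ∑' x, f x (u x) * u x)
    (hsf : Summable fun x => f x (u x) * u x) (hsF : Summable fun x => Fprim f x (u x)) :
    PhiFun N p V f u = ∑' x, nehariDefect p (f x) (u x) := by
  rw [PhiFun, hNeh, ← tsum_mul_left, ← (hsf.mul_left _).tsum_sub hsF]
  exact tsum_congr fun x => by rw [nehariDefect, Fprim]; ring

lemma abs_le_lpSum_rpow (hp : 0 < p) (hu : memE N p u) (x : Vtx N) :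
    |u x| ≤ lpSum N p u ^ (1 / p) := by
  rw [lpSum, one_div, Real.le_rpow_inv_iff_of_pos (abs_nonneg _)
    (tsum_nonneg fun _ => Real.rpow_nonneg (abs_nonneg _) p) hp]
  exact hu.le_tsum x fun y _ => Real.rpow_nonneg (abs_nonneg _) p

lemma summable_of_memE (hp : 1 ≤ p)
    (hbound : ∀ M, ∃ C ≥ 0, ∀ x t, |t| ≤ M → |f x t| ≤ C * |t| ^ (p - 1)) (hu : memE N p u) :
    (Summable fun x => f x (u x) * u x) ∧ Summable fun x => Fprim f x (u x) := by
  obtain ⟨C, hC0, hC⟩ := hbound (lpSum N p u ^ (1 / p))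
  have hsup := abs_le_lpSum_rpow (by linarith) hu
  constructor
  · refine Summable.of_norm_bounded (hu.mul_left C) fun x => ?_
    rw [Real.norm_eq_abs, abs_mul, ← abs_rpow_sub_one_mul_abs (by linarith), ← mul_assoc]
    exact mul_le_mul_of_nonneg_right (hC x _ (hsup x)) (abs_nonneg _)
  · refine Summable.of_norm_bounded (hu.mul_left C) fun x => ?_
    exact abs_integral_le_mul_abs_rpow hp hC0 fun s hs => hC x s (hs.trans (hsup x))

end Functional

theorem exists_eNormP_le_of_mem_Nehari_of_PhiFun_le {N : ℕ} {p V₀ V₁ : ℝ} {V : Vtx N → ℝ}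
    {f : Vtx N → ℝ → ℝ} (hp : 1 ≤ p) (hV₀ : 0 < V₀) (hV : ∀ x, V₀ ≤ V x ∧ V x ≤ V₁)
    (hf : ∀ x, Continuous (f x))
    (hmono_neg : ∀ x, MonotoneOn (fun t => f x t / |t| ^ (p - 1)) (Iio 0))
    (hmono_pos : ∀ x, MonotoneOn (fun t => f x t / |t| ^ (p - 1)) (Ioi 0))
    (hsmall : ∀ ε > (0 : ℝ), ∃ δ > (0 : ℝ), ∀ x u, |u| < δ → |f x u| ≤ ε * |u| ^ (p - 1))
    (hlarge : ∀ M : ℝ, ∃ R > (0 : ℝ), ∀ x u, R ≤ |u| → M ≤ Fprim f x u / |u| ^ p)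
    (hbound : ∀ M, ∃ C ≥ 0, ∀ x t, |t| ≤ M → |f x t| ≤ C * |t| ^ (p - 1)) (C : ℝ) :
    ∃ B, ∀ w ∈ Nehari N p V f, PhiFun N p V f w ≤ C → eNormP N p V w ≤ B := by
  have hp0 : 0 < p := by linarith
  obtain ⟨R, -, hR⟩ := exists_le_nehariDefect hp hf hmono_neg hmono_pos hsmall hlarge (C + 1)
  obtain ⟨μ, hμ, hμR⟩ :=
    exists_mul_self_le_add_nehariDefect hp hf hmono_neg hmono_pos hsmall (half_pos hV₀) R
  refine ⟨2 * μ * C, fun w hw hΦ => ?_⟩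
  have hNeh := eNormP_eq_tsum_of_mem_Nehari hp0.ne' hw
  obtain ⟨hsf, hsF⟩ := summable_of_memE hp hbound hw.1
  have hsΨ : Summable fun x => nehariDefect p (f x) (w x) := (hsf.div_const p).sub hsF
  have hΨ x := nehariDefect_nonneg hp0 (hf x) (hmono_neg x) (hmono_pos x) (w x)
  rw [PhiFun_eq_tsum_nehariDefect hNeh hsf hsF] at hΦ
  -- each term of `Φ(w) = ∑ Ψ` is at most `C`, which keeps `w` uniformly below `R`
  have hwR : ∀ x, |w x| ≤ R := fun x => le_of_not_gt fun hx => by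
    linarith [hR x (w x) hx.le, hsΨ.le_tsum x fun y _ => hΨ y]
  have hsV : Summable fun x => V x * |w x| ^ p :=
    Summable.of_nonneg_of_le
      (fun x => mul_nonneg (hV₀.le.trans (hV x).1) (Real.rpow_nonneg (abs_nonneg _) p))
      (fun x => mul_le_mul_of_nonneg_right (hV x).2 (Real.rpow_nonneg (abs_nonneg _) p))
      (hw.1.mul_left V₁)
  have hbound : eNormP N p V w ≤ eNormP N p V w / 2 + μ * C := calc
    eNormP N p V w = ∑' x, f x (w x) * w x := hNeh
    _ ≤ ∑' x, (V₀ / 2 * |w x| ^ p + μ * nehariDefect p (f x) (w x)) :=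
        hsf.tsum_le_tsum (fun x => hμR x (w x) (hwR x)) ((hw.1.mul_left _).add (hsΨ.mul_left μ))
    _ = (∑' x, V₀ * |w x| ^ p) / 2 + μ * ∑' x, nehariDefect p (f x) (w x) := by
        rw [(hw.1.mul_left _).tsum_add (hsΨ.mul_left μ), tsum_mul_left, tsum_mul_left,
          tsum_mul_left]
        ring
    _ ≤ (∑' x, V x * |w x| ^ p) / 2 + μ * C := by
        have hV₀V := (hw.1.mul_left V₀).tsum_le_tsum
          (fun x => mul_le_mul_of_nonneg_right (hV x).1 (Real.rpow_nonneg (abs_nonneg _) p)) hsV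
        nlinarith
    _ ≤ eNormP N p V w / 2 + μ * C := by
        have := pEnergy_nonneg (N := N) (p := p) (u := w)
        rw [eNormP]
        linarith
  linarith

theorem stmt_13_general (N : ℕ) (p q : ℝ) (hp : 1 < p) (hq : p < q)
    (V : Vtx N → ℝ) (f : Vtx N → ℝ → ℝ) (T : ℕ) (hT : 0 < T)
    (hA1 : ∃ a : ℝ, 0 < a ∧ ∀ x u, |f x u| ≤ a * (1 + |u| ^ (q - 1)))
    (hfc : ∀ x, Continuous (f x))
    (hA2V : ∀ x (i : Fin N), V (x + (T : ℤ) • Pi.single i 1) = V x)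
    (hVpos : ∀ x, 0 < V x)
    (hA3 : ∀ ε > (0:ℝ), ∃ δ > (0:ℝ), ∀ x u, |u| < δ → |f x u| ≤ ε * |u| ^ (p - 1))
    (hA4 : ∀ x, StrictMonoOn (fun u => f x u / |u| ^ (p - 1)) (Set.Iio 0) ∧
               StrictMonoOn (fun u => f x u / |u| ^ (p - 1)) (Set.Ioi 0))
    (hA5 : ∀ M : ℝ, ∃ R > (0:ℝ), ∀ x u, R ≤ |u| → M ≤ Fprim f x u / |u| ^ p)
    (u : ℕ → (Vtx N → ℝ)) (hmem : ∀ n, u n ∈ Nehari N p V f)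
    (hnorm : Tendsto (fun n => eNorm N p V (u n)) atTop atTop) :
    Tendsto (fun n => PhiFun N p V f (u n)) atTop atTop := by
  obtain ⟨a, ha, hgrowth⟩ := hA1
  obtain ⟨V₀, hV₀, V₁, hV⟩ := exists_pos_bounds_of_periodic hT hA2V hVpos
  have hbound := exists_abs_le_mul_rpow_of_abs_le hp.le (by linarith) ha.le hgrowth hA3
  refine tendsto_atTop.2 fun C => ?_
  obtain ⟨B, hB⟩ := exists_eNormP_le_of_mem_Nehari_of_PhiFun_le hp.le hV₀ hV hfc
    (fun x => (hA4 x).1.monotoneOn) (fun x => (hA4 x).2.monotoneOn) hA3 hA5 hbound C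
  filter_upwards [hnorm.eventually_gt_atTop (B ^ (1 / p))] with n hn
  by_contra! hlt
  refine hn.not_ge (Real.rpow_le_rpow ?_ (hB (u n) (hmem n) hlt.le) (by positivity))
  exact eNormP_nonneg fun x => (hVpos x).le

/-- Phi is coercive on the Nehari manifold. -/
theorem stmt_13 (N : ℕ) (p q : ℝ) (hp : 1 < p) (hq : p < q)
    (V : Vtx N → ℝ) (f : Vtx N → ℝ → ℝ) (T : ℕ) (hT : 0 < T)
    (hA1 : ∃ a : ℝ, 0 < a ∧ ∀ x u, |f x u| ≤ a * (1 + |u| ^ (q - 1)))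
    (hfc : ∀ x, Continuous (f x))
    (hA2V : ∀ x (i : Fin N), V (x + (T : ℤ) • Pi.single i 1) = V x)
    (hA2f : ∀ x (i : Fin N) (u : ℝ), f (x + (T : ℤ) • Pi.single i 1) u = f x u)
    (hVpos : ∀ x, 0 < V x)
    (hA3 : ∀ ε > (0:ℝ), ∃ δ > (0:ℝ), ∀ x u, |u| < δ → |f x u| ≤ ε * |u| ^ (p - 1))
    (hA4 : ∀ x, StrictMonoOn (fun u => f x u / |u| ^ (p - 1)) (Set.Iio 0) ∧
               StrictMonoOn (fun u => f x u / |u| ^ (p - 1)) (Set.Ioi 0))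
    (hA5 : ∀ M : ℝ, ∃ R > (0:ℝ), ∀ x u, R ≤ |u| → M ≤ Fprim f x u / |u| ^ p)
    (u : ℕ → (Vtx N → ℝ)) (hmem : ∀ n, u n ∈ Nehari N p V f)
    (hnorm : Tendsto (fun n => eNorm N p V (u n)) atTop atTop) :
    Tendsto (fun n => PhiFun N p V f (u n)) atTop atTop :=
  stmt_13_general N p q hp hq V f T hT hA1 hfc hA2V hVpos hA3 hA4 hA5 u hmem hnorm
end
end

section
/- With assumptions (A₁)–(A₅), if {u_n} ⊂ 𝒩 is a bounded Palais–Smale sequence for Φ (Φ(u_n) → c, Φ'(u_n) → 0) and u_n ⇀ u with pointwise convergence at every vertex, then Φ'(u) = 0; that is, the weak pointwise limit of a Palais–Smale sequence is a critical point of Φ. -/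
open scoped BigOperators
open Filter Topology

noncomputable section

/-! Testing the Palais–Smale condition against a Kronecker delta `δₓ` isolates the
Euler–Lagrange equation at the vertex `x`; this involves only finitely many values of `uₙ`,
so it passes to the pointwise limit. Summation by parts,
`(1/2) ∑_{x∼y} φ(∇u)(∇v) = -∑ₓ Δₚu(x) v(x)` with `φ(t) = |t|^{p-2} t`, then turns the
vertexwise equation into `Φ'(u)v = 0` for every `v ∈ ℓᵖ`; the pair sums converge by Young's
inequality because every vertex has at most `3ᴺ` neighbours, and `∑ f(x,u) v` converges by
(A₃), since `u(x) → 0`. -/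

namespace LatAdj

variable {N : ℕ} {x y : Vtx N}

theorem symm (h : LatAdj x y) : LatAdj y x := by
  simpa only [LatAdj, abs_sub_comm] using h

theorem comm : LatAdj x y ↔ LatAdj y x := ⟨symm, symm⟩

end LatAdj

namespace PLaplacian

open Finset

variable {N : ℕ} {p : ℝ}

def unitBox (x : Vtx N) : Finset (Vtx N) :=
  Fintype.piFinset fun i => Icc (x i - 1) (x i + 1)

theorem card_unitBox (x : Vtx N) : #(unitBox x) = 3 ^ N := by
  simp [unitBox, Fintype.card_piFinset, Int.card_Icc, show ∀ a : ℤ, a + 1 + 1 - (a - 1) = 3 by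
    intro a; ring]

theorem mem_unitBox_of_adj {x y : Vtx N} (h : LatAdj x y) : y ∈ unitBox x := by
  rw [unitBox, Fintype.mem_piFinset]
  intro i
  have hi : |x i - y i| ≤ 1 :=
    (single_le_sum (fun j _ => abs_nonneg (x j - y j)) (mem_univ i)).trans_eq h
  rw [mem_Icc]
  constructor <;> linarith [abs_le.mp hi]

theorem tsum_ite_adj_eq_sum {M : Type*} [AddCommMonoid M] [TopologicalSpace M]
    (x : Vtx N) (g : Vtx N → M) :
    ∑' y, (if LatAdj x y then g y else 0) = ∑ y ∈ unitBox x, if LatAdj x y then g y else 0 :=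
  tsum_eq_sum fun _ hy => if_neg fun h => hy (mem_unitBox_of_adj h)

theorem abs_abs_rpow_sub_two_mul_self (hp : p ≠ 1) (t : ℝ) :
    |(|t| ^ (p - 2) * t)| = |t| ^ (p - 1) := by
  rcases eq_or_ne t 0 with rfl | ht
  · simp [Real.zero_rpow (sub_ne_zero.mpr hp)]
  · rw [abs_mul, abs_of_nonneg (Real.rpow_nonneg (abs_nonneg t) _), ← Real.rpow_add_one
      (abs_ne_zero.mpr ht)]
    ring_nf

theorem continuous_abs_rpow_sub_two_mul_self (hp : 1 < p) :
    Continuous fun t : ℝ => |t| ^ (p - 2) * t := by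
  refine continuous_iff_continuousAt.mpr fun t => ?_
  rcases eq_or_ne t 0 with rfl | ht
  · have hpow : Continuous fun s : ℝ => |s| ^ (p - 1) :=
      continuous_abs.rpow_const fun _ => Or.inr (by linarith)
    have h0 := hpow.tendsto 0
    rw [abs_zero, Real.zero_rpow (by linarith)] at h0
    simpa [ContinuousAt] using squeeze_zero_norm
      (fun s => (abs_abs_rpow_sub_two_mul_self hp.ne' s).le) h0
  · exact ((Real.continuousAt_rpow_const _ _ (Or.inl (abs_ne_zero.mpr ht))).comp
      continuous_abs.continuousAt).mul continuousAt_id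

theorem abs_rpow_sub_one_mul_abs_le (hp : 1 < p) (a b : ℝ) :
    |a| ^ (p - 1) * |b| ≤ |a| ^ p / (p / (p - 1)) + |b| ^ p / p := by
  have h := Real.young_inequality_of_nonneg (Real.rpow_nonneg (abs_nonneg a) (p - 1))
    (abs_nonneg b) (Real.HolderConjugate.conjExponent hp).symm
  rwa [Real.conjExponent, ← Real.rpow_mul (abs_nonneg a),
    mul_div_cancel₀ _ (sub_ne_zero.mpr hp.ne')] at h

theorem abs_sub_rpow_le (hp : 0 ≤ p) (a b : ℝ) :
    |a - b| ^ p ≤ 2 ^ p * (|a| ^ p + |b| ^ p) := by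
  have hmax : |a - b| ≤ 2 * max |a| |b| := by
    apply (abs_sub a b).trans
    linarith [le_max_left |a| |b|, le_max_right |a| |b|]
  calc |a - b| ^ p ≤ (2 * max |a| |b|) ^ p := Real.rpow_le_rpow (abs_nonneg _) hmax hp
    _ = 2 ^ p * max |a| |b| ^ p := Real.mul_rpow zero_le_two (le_max_of_le_left (abs_nonneg a))
    _ ≤ 2 ^ p * (|a| ^ p + |b| ^ p) := by
      gcongr
      rcases max_cases |a| |b| with ⟨h, _⟩ | ⟨h, _⟩ <;> rw [h]
      · exact le_add_of_nonneg_right (Real.rpow_nonneg (abs_nonneg _) _)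
      · exact le_add_of_nonneg_left (Real.rpow_nonneg (abs_nonneg _) _)

theorem summable_mul_of_abs_le_rpow_of_small {ι : Type*} (hp : 1 < p) {a b g : ι → ℝ}
    (ha : Summable fun i => |a i| ^ p) (hb : Summable fun i => |b i| ^ p) {δ : ℝ}
    (hδ : 0 < δ) (hg : ∀ i, |a i| < δ → |g i| ≤ |a i| ^ (p - 1)) :
    Summable fun i => g i * b i := by
  refine .of_norm_bounded_eventually ((ha.div_const (p / (p - 1))).add (hb.div_const p)) ?_
  filter_upwards [ha.tendsto_cofinite_zero (Iio_mem_nhds (Real.rpow_pos_of_pos hδ p))] with i hi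
  have hsmall : |a i| < δ :=
    (Real.rpow_lt_rpow_iff (abs_nonneg _) hδ.le (by linarith)).mp hi
  rw [Real.norm_eq_abs, abs_mul]
  exact (mul_le_mul_of_nonneg_right (hg i hsmall) (abs_nonneg _)).trans
    (abs_rpow_sub_one_mul_abs_le hp _ _)

theorem summable_ite_adj_fst {w : Vtx N → ℝ} (hw : Summable w) (hw0 : 0 ≤ w) :
    Summable fun z : Vtx N × Vtx N => if LatAdj z.1 z.2 then w z.1 else 0 := by
  have hnn : 0 ≤ fun z : Vtx N × Vtx N => if LatAdj z.1 z.2 then w z.1 else 0 := fun z => by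
    dsimp only; split_ifs; exacts [hw0 z.1, le_rfl]
  refine (summable_prod_of_nonneg hnn).mpr ⟨fun x => ?_, ?_⟩
  · exact summable_of_ne_finset_zero fun _ hy => if_neg fun h => hy (mem_unitBox_of_adj h)
  refine .of_nonneg_of_le (fun x => tsum_nonneg fun y => hnn (x, y)) (fun x => ?_)
    (hw.mul_left (3 ^ N))
  rw [tsum_ite_adj_eq_sum x fun _ => w x]
  calc ∑ y ∈ unitBox x, (if LatAdj x y then w x else 0)
      ≤ #(unitBox x) • w x :=
        sum_le_card_nsmul _ _ _ fun y _ => by split_ifs; exacts [le_rfl, hw0 x]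
    _ = 3 ^ N * w x := by rw [card_unitBox, nsmul_eq_mul]; push_cast; ring

theorem summable_ite_adj_snd {w : Vtx N → ℝ} (hw : Summable w) (hw0 : 0 ≤ w) :
    Summable fun z : Vtx N × Vtx N => if LatAdj z.1 z.2 then w z.2 else 0 := by
  refine ((Equiv.prodComm _ _).summable_iff.mpr (summable_ite_adj_fst hw hw0)).congr fun z => ?_
  exact if_congr LatAdj.comm rfl rfl

theorem summable_ite_adj_abs_sub_rpow (hp : 0 ≤ p) {w : Vtx N → ℝ} (hw : memE N p w) :
    Summable fun z : Vtx N × Vtx N => if LatAdj z.1 z.2 then |w z.2 - w z.1| ^ p else 0 := by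
  have hw0 : 0 ≤ fun x => |w x| ^ p := fun x => Real.rpow_nonneg (abs_nonneg _) _
  refine .of_nonneg_of_le (fun z => ?_) (fun z => ?_)
    (((summable_ite_adj_snd hw hw0).add (summable_ite_adj_fst hw hw0)).mul_left (2 ^ p))
  all_goals split_ifs
  · exact Real.rpow_nonneg (abs_nonneg _) _
  · exact le_rfl
  · simpa using abs_sub_rpow_le hp (w z.2) (w z.1)
  · simp

def edgeFlux (p : ℝ) (u : Vtx N → ℝ) (z : Vtx N × Vtx N) : ℝ :=
  if LatAdj z.1 z.2 then |u z.2 - u z.1| ^ (p - 2) * (u z.2 - u z.1) else 0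

theorem edgeFlux_swap (u : Vtx N → ℝ) (z : Vtx N × Vtx N) :
    edgeFlux p u z.swap = -edgeFlux p u z := by
  simp only [edgeFlux, Prod.fst_swap, Prod.snd_swap]
  by_cases h : LatAdj z.1 z.2
  · rw [if_pos h.symm, if_pos h, ← neg_sub, abs_neg]; ring
  · rw [if_neg (mt LatAdj.symm h), if_neg h, neg_zero]

theorem summable_edgeFlux_mul_fst (hp : 1 < p) {u v : Vtx N → ℝ} (hu : memE N p u)
    (hv : memE N p v) : Summable fun z : Vtx N × Vtx N => edgeFlux p u z * v z.1 := by
  refine .of_norm_bounded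
    (((summable_ite_adj_abs_sub_rpow (by linarith) hu).div_const (p / (p - 1))).add
      ((summable_ite_adj_fst hv fun x => Real.rpow_nonneg (abs_nonneg (v x)) p).div_const p))
    fun z => ?_
  rw [edgeFlux]
  split_ifs
  · rw [Real.norm_eq_abs, abs_mul, abs_abs_rpow_sub_two_mul_self hp.ne']
    exact abs_rpow_sub_one_mul_abs_le hp _ _
  · simp

theorem hasSum_pLap_mul (hp : 1 < p) {u v : Vtx N → ℝ} (hu : memE N p u) (hv : memE N p v) :
    HasSum (fun x => pLap N p u x * v x) (∑' z, edgeFlux p u z * v z.1) := by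
  have hS := summable_edgeFlux_mul_fst hp hu hv
  refine hS.hasSum.prod_fiberwise fun x => ?_
  have hx := (hS.prod_factor x).hasSum
  dsimp only at hx ⊢
  rwa [tsum_mul_right] at hx

theorem gradPair_eq_neg_tsum_pLap_mul (hp : 1 < p) {u v : Vtx N → ℝ} (hu : memE N p u)
    (hv : memE N p v) : gradPair N p u v = -∑' x, pLap N p u x * v x := by
  have hS := summable_edgeFlux_mul_fst hp hu hv
  have hswap : (fun z : Vtx N × Vtx N => edgeFlux p u z * v z.2)
      = fun z => -(edgeFlux p u z.swap * v z.swap.1) := by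
    ext z; rw [edgeFlux_swap, Prod.fst_swap]; ring
  have hS' : Summable fun z : Vtx N × Vtx N => edgeFlux p u z * v z.2 := by
    rw [hswap]; exact ((Equiv.prodComm _ _).summable_iff.mpr hS).neg
  have hsnd : ∑' z, edgeFlux p u z * v z.2 = -∑' z, edgeFlux p u z * v z.1 := by
    rw [hswap, tsum_neg]
    exact congrArg _ ((Equiv.prodComm _ _).tsum_eq fun z => edgeFlux p u z * v z.1)
  have hterm : ∀ z : Vtx N × Vtx N,
      (if LatAdj z.1 z.2 then |u z.2 - u z.1| ^ (p - 2) * (u z.2 - u z.1) * (v z.2 - v z.1)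
        else 0) = edgeFlux p u z * v z.2 - edgeFlux p u z * v z.1 := fun z => by
    rw [edgeFlux]; split_ifs <;> ring
  rw [gradPair, tsum_congr hterm, hS'.tsum_sub hS, hsnd, (hasSum_pLap_mul hp hu hv).tsum_eq]
  ring

theorem tendsto_pLap {ι : Type*} {l : Filter ι} (hp : 1 < p) {u : ι → Vtx N → ℝ}
    {w : Vtx N → ℝ} (h : ∀ x, Tendsto (fun n => u n x) l (𝓝 (w x))) (x : Vtx N) :
    Tendsto (fun n => pLap N p (u n) x) l (𝓝 (pLap N p w x)) := by
  simp only [pLap, tsum_ite_adj_eq_sum x]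
  refine tendsto_finsetSum _ fun y _ => ?_
  split_ifs
  · exact ((continuous_abs_rpow_sub_two_mul_self hp).tendsto _).comp ((h y).sub (h x))
  · exact tendsto_const_nhds

theorem memE_single (hp : 0 < p) (x : Vtx N) : memE N p (Pi.single x 1) := by
  refine summable_of_ne_finset_zero (s := {x}) fun y hy => ?_
  rw [Pi.single_eq_of_ne (by simpa using hy), abs_zero, Real.zero_rpow hp.ne']

theorem phiDeriv_single (hp : 1 < p) (V : Vtx N → ℝ) (f : Vtx N → ℝ → ℝ)
    {u : Vtx N → ℝ} (hu : memE N p u) (x : Vtx N) :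
    PhiDeriv N p V f u (Pi.single x 1)
      = -pLap N p u x + V x * |u x| ^ (p - 2) * u x - f x (u x) := by
  have hsingle (g : Vtx N → ℝ) : ∑' y, g y * (Pi.single x 1 : Vtx N → ℝ) y = g x := by
    rw [tsum_eq_single x fun y hy => by rw [Pi.single_eq_of_ne hy, mul_zero],
      Pi.single_eq_same, mul_one]
  rw [PhiDeriv, gradPair_eq_neg_tsum_pLap_mul hp hu (memE_single (by linarith) x), hsingle,
    hsingle (fun y => V y * |u y| ^ (p - 2) * u y), hsingle fun y => f y (u y)]

theorem phiDeriv_eq_zero_of_eulerLagrange (hp : 1 < p) {V : Vtx N → ℝ}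
    {f : Vtx N → ℝ → ℝ} {u v : Vtx N → ℝ} (hu : memE N p u) (hv : memE N p v) {δ : ℝ}
    (hδ : 0 < δ) (hf : ∀ x, |u x| < δ → |f x (u x)| ≤ |u x| ^ (p - 1))
    (hEL : ∀ x, V x * |u x| ^ (p - 2) * u x = f x (u x) + pLap N p u x) :
    PhiDeriv N p V f u v = 0 := by
  have hfv : Summable fun x => f x (u x) * v x :=
    summable_mul_of_abs_le_rpow_of_small hp hu hv hδ hf
  have hV : ∑' x, V x * |u x| ^ (p - 2) * u x * v x
      = ∑' x, f x (u x) * v x + ∑' x, pLap N p u x * v x := by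
    rw [← hfv.tsum_add (hasSum_pLap_mul hp hu hv).summable]
    exact tsum_congr fun x => by rw [hEL, add_mul]
  rw [PhiDeriv, gradPair_eq_neg_tsum_pLap_mul hp hu hv, hV]
  ring

end PLaplacian

open PLaplacian

theorem stmt_18_general (N : ℕ) (p : ℝ) (hp : 1 < p)
    (V : Vtx N → ℝ) (f : Vtx N → ℝ → ℝ)
    (hfc : ∀ x, Continuous (f x))
    (hA3 : ∀ ε > (0:ℝ), ∃ δ > (0:ℝ), ∀ x u, |u| < δ → |f x u| ≤ ε * |u| ^ (p - 1))
    (u : ℕ → (Vtx N → ℝ)) (hmem : ∀ n, u n ∈ Nehari N p V f)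
    (ε : ℕ → ℝ) (hε : Tendsto ε atTop (𝓝 0))
    (hPS : ∀ n, ∀ v : Vtx N → ℝ, memE N p v →
      |PhiDeriv N p V f (u n) v| ≤ ε n * eNorm N p V v)
    (ulim : Vtx N → ℝ) (hulim : memE N p ulim)
    (hptw : ∀ x, Tendsto (fun n => u n x) atTop (𝓝 (ulim x))) :
    ∀ v : Vtx N → ℝ, memE N p v → PhiDeriv N p V f ulim v = 0 := by
  intro v hv
  have hEL : ∀ x, V x * |ulim x| ^ (p - 2) * ulim x = f x (ulim x) + pLap N p ulim x := by
    intro x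
    have hδx := memE_single (by linarith) x
    have htest : Tendsto (fun n => PhiDeriv N p V f (u n) (Pi.single x 1)) atTop (𝓝 0) :=
      squeeze_zero_norm (fun n => hPS n _ hδx) (by simpa using hε.mul_const _)
    have hlim : Tendsto (fun n => PhiDeriv N p V f (u n) (Pi.single x 1)) atTop
        (𝓝 (-pLap N p ulim x + V x * |ulim x| ^ (p - 2) * ulim x - f x (ulim x))) := by
      simp_rw [phiDeriv_single hp V f (hmem _).1, mul_assoc (V x)]
      exact ((tendsto_pLap hp hptw x).neg.add
        ((((continuous_abs_rpow_sub_two_mul_self hp).tendsto _).comp (hptw x)).const_mul _)).sub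
        (((hfc x).tendsto _).comp (hptw x))
    linarith [tendsto_nhds_unique hlim htest]
  obtain ⟨δ, hδ, hfδ⟩ := hA3 1 one_pos
  exact phiDeriv_eq_zero_of_eulerLagrange hp hulim hv hδ
    (fun x hx => by simpa using hfδ x _ hx) hEL

/-- the weak/pointwise limit of a bounded Palais-Smale sequence on the
Nehari manifold is a critical point of Phi. -/
theorem stmt_18 (N : ℕ) (p q : ℝ) (hp : 1 < p) (hq : p < q)
    (V : Vtx N → ℝ) (f : Vtx N → ℝ → ℝ) (T : ℕ) (hT : 0 < T)
    (hA1 : ∃ a : ℝ, 0 < a ∧ ∀ x u, |f x u| ≤ a * (1 + |u| ^ (q - 1)))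
    (hfc : ∀ x, Continuous (f x))
    (hA2V : ∀ x (i : Fin N), V (x + (T : ℤ) • Pi.single i 1) = V x)
    (hA2f : ∀ x (i : Fin N) (u : ℝ), f (x + (T : ℤ) • Pi.single i 1) u = f x u)
    (hVpos : ∀ x, 0 < V x)
    (hA3 : ∀ ε > (0:ℝ), ∃ δ > (0:ℝ), ∀ x u, |u| < δ → |f x u| ≤ ε * |u| ^ (p - 1))
    (hA4 : ∀ x, StrictMonoOn (fun u => f x u / |u| ^ (p - 1)) (Set.Iio 0) ∧
               StrictMonoOn (fun u => f x u / |u| ^ (p - 1)) (Set.Ioi 0))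
    (hA5 : ∀ M : ℝ, ∃ R > (0:ℝ), ∀ x u, R ≤ |u| → M ≤ Fprim f x u / |u| ^ p)
    (u : ℕ → (Vtx N → ℝ)) (hmem : ∀ n, u n ∈ Nehari N p V f)
    (M : ℝ) (hbd : ∀ n, eNorm N p V (u n) ≤ M)
    (c : ℝ) (hPhi : Tendsto (fun n => PhiFun N p V f (u n)) atTop (𝓝 c))
    (ε : ℕ → ℝ) (hε : Tendsto ε atTop (𝓝 0))
    (hPS : ∀ n, ∀ v : Vtx N → ℝ, memE N p v →
      |PhiDeriv N p V f (u n) v| ≤ ε n * eNorm N p V v)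
    (ulim : Vtx N → ℝ) (hulim : memE N p ulim)
    (hweak : ∀ v : Vtx N → ℝ, Summable (fun x => |v x| ^ (p / (p - 1))) →
      Tendsto (fun n => ∑' x, u n x * v x) atTop (𝓝 (∑' x, ulim x * v x)))
    (hptw : ∀ x, Tendsto (fun n => u n x) atTop (𝓝 (ulim x))) :
    ∀ v : Vtx N → ℝ, memE N p v → PhiDeriv N p V f ulim v = 0 :=
  stmt_18_general N p hp V f hfc hA3 u hmem ε hε hPS ulim hulim hptw
end
end
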